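/- arXiv:2203.11609 — 5 statements merged into one kernel-verified Lean document; each statement's English description precedes it below -/
import Mathlib

section
/- Let H be a Hardy field containing ℒℰ and let a_1,...,a_k ∈ H have polynomial growth. Then the real linear span V of {a_1,...,a_k} (inside the space of germs at +∞) admits a basis (g_1,...,g_m, u_1,...,u_ℓ) (possibly m = 0 or ℓ = 0) with the following properties: (1) for each 1 ≤ i ≤ ℓ there is a real polynomial p_i with u_i(t) − p_i(t) → 0 as t → +∞; (2) each g_j can be written g_j(t) = q_j(t) + x_j(t) where q_j is a real polynomial and x_j ∈ H is strongly non-polynomial with |x_j(t)| → +∞ as t → +∞; (3) for i ≠ j the functions x_i and x_j have distinct growth rates, i.e., x_i(t)/x_j(t) tends to 0 or to ±∞ as t → +∞. -/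
open Filter MeasureTheory Topology

noncomputable section

/-- `f ≺ g` : `f(t)/g(t) → 0` as `t → +∞`. -/
def Prec (f g : ℝ → ℝ) : Prop :=
  Filter.Tendsto (fun t => f t / g t) Filter.atTop (nhds 0)

/-- `f ≪ g` : `|f(t)| ≤ C |g(t)|` for some constant `C > 0` and all large `t`. -/
def Dom (f g : ℝ → ℝ) : Prop :=
  ∃ C : ℝ, 0 < C ∧ ∀ᶠ t in Filter.atTop, |f t| ≤ C * |g t|

/-- `f` has polynomial growth: `f(t)/t^k → 0` for some positive integer `k`. -/
def PolyGrowth (f : ℝ → ℝ) : Prop :=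
  ∃ k : ℕ, 0 < k ∧ Filter.Tendsto (fun t => f t / t ^ k) Filter.atTop (nhds 0)

/-- The logarithmico-exponential functions of Hardy: built from constants and the
identity by `+`, `-`, `*`, `/`, `exp`, `log` and composition. -/
inductive IsLE : (ℝ → ℝ) → Prop
  | const (c : ℝ) : IsLE fun _ => c
  | id : IsLE fun t => t
  | add {f g} : IsLE f → IsLE g → IsLE (f + g)
  | sub {f g} : IsLE f → IsLE g → IsLE (f - g)
  | mul {f g} : IsLE f → IsLE g → IsLE (f * g)
  | div {f g} : IsLE f → IsLE g → IsLE (f / g)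
  | exp {f} : IsLE f → IsLE fun t => Real.exp (f t)
  | log {f} : IsLE f → IsLE fun t => Real.log (f t)
  | comp {f g} : IsLE f → IsLE g → IsLE (f ∘ g)

/-- A Hardy field: a collection of (representatives of) germs at `+∞` of real functions,
closed under germ equality, forming a field under pointwise operations, and closed under
differentiation (each element is eventually differentiable, with derivative again in `H`). -/
structure IsHardyField (H : Set (ℝ → ℝ)) : Prop where
  mem_congr : ∀ {f g : ℝ → ℝ}, f ∈ H → f =ᶠ[Filter.atTop] g → g ∈ H
  zero_mem : (fun _ : ℝ => (0 : ℝ)) ∈ H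
  one_mem : (fun _ : ℝ => (1 : ℝ)) ∈ H
  add_mem : ∀ {f g : ℝ → ℝ}, f ∈ H → g ∈ H → f + g ∈ H
  neg_mem : ∀ {f : ℝ → ℝ}, f ∈ H → -f ∈ H
  mul_mem : ∀ {f g : ℝ → ℝ}, f ∈ H → g ∈ H → f * g ∈ H
  inv_mem : ∀ {f : ℝ → ℝ}, f ∈ H → ¬ (f =ᶠ[Filter.atTop] fun _ => (0 : ℝ)) →
    (fun t => (f t)⁻¹) ∈ H
  eventuallyDifferentiable : ∀ {f : ℝ → ℝ}, f ∈ H →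
    ∀ᶠ t in Filter.atTop, DifferentiableAt ℝ f t
  deriv_mem : ∀ {f : ℝ → ℝ}, f ∈ H → deriv f ∈ H

/-- `H` contains (the germs of) all logarithmico-exponential functions. -/
def ContainsLE (H : Set (ℝ → ℝ)) : Prop := ∀ f : ℝ → ℝ, IsLE f → f ∈ H

/-- strongly non-polynomial: `t^k ≺ f ≺ t^{k+1}` for some `k ∈ ℕ`, or `f(t) → 0`. -/
def StronglyNonPoly (f : ℝ → ℝ) : Prop :=
  (∃ k : ℕ, Prec (fun t => t ^ k) f ∧ Prec f fun t => t ^ (k + 1)) ∨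
    Filter.Tendsto f Filter.atTop (nhds 0)

/-!
Write every element of the span as a polynomial plus a remainder. An element `f = o(t ^ K)` of the
Hardy field is peeled degree by degree: `f / t ^ k` has a limit in `[-∞, ∞]` (Hardy field
elements are eventually monotone), and if it is a finite `c` we pass to `f - c t ^ k`. What is
left is either `o(1)` or strictly between two consecutive powers of `t`.

The `u i` form a basis of the elements that are a polynomial plus `o(1)`; on a complement `U` the
remainders are Gaussian-eliminated by growth. Among the remainders of a basis of `U` pick one, `z`,
of maximal growth; subtracting multiples of its basis vector makes every other remainder `o(z)`.
The subspace of `U` of polynomials plus `o(z)` has codimension one, and a polynomial absorbed into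
a function strictly between powers has smaller degree, so the remainders of all its elements are
`o(z)`. Induction on the dimension gives the `g j` with remainders of pairwise distinct growth.
-/

open Asymptotics Polynomial

section HardyLimits

variable {H : Set (ℝ → ℝ)} {f g : ℝ → ℝ}

lemma IsHardyField.eventually_ne_zero (hH : IsHardyField H) (hf : f ∈ H)
    (h0 : ¬ f =ᶠ[atTop] fun _ => (0 : ℝ)) : ∀ᶠ t in atTop, f t ≠ 0 := by
  obtain ⟨T, hT⟩ := eventually_atTop.1
    ((hH.eventuallyDifferentiable hf).and (hH.eventuallyDifferentiable (hH.inv_mem hf h0)))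
  -- `f * f⁻¹` is continuous on `[T, ∞)` and takes only the values `0` and `1`.
  let e : ℝ → ℝ := fun t => f t * (f t)⁻¹
  have he : ContinuousOn e (Set.Ici T) := fun t ht =>
    ((hT t ht).1.continuousAt.mul (hT t ht).2.continuousAt).continuousWithinAt
  by_contra hzero
  obtain ⟨a, ha, hfa⟩ := frequently_atTop.1 (not_eventually.1 h0) T
  obtain ⟨b, hb, hfb⟩ := frequently_atTop.1 (not_eventually.1 hzero) T
  have hhalf : (1 / 2 : ℝ) ∈ Set.Icc (e b) (e a) := by
    simp only [e, not_not.1 hfb, mul_inv_cancel₀ hfa]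
    norm_num
  obtain ⟨t, -, ht⟩ := isPreconnected_Ici.intermediate_value hb ha he hhalf
  rcases eq_or_ne (f t) 0 with h | h <;> simp [e, h] at ht

lemma IsHardyField.eventually_nonneg_or_nonpos (hH : IsHardyField H) (hf : f ∈ H) :
    (∀ᶠ t in atTop, 0 ≤ f t) ∨ ∀ᶠ t in atTop, f t ≤ 0 := by
  by_cases h0 : f =ᶠ[atTop] fun _ => (0 : ℝ)
  · exact Or.inl (h0.mono fun t ht => ht.ge)
  obtain ⟨T, hT⟩ := eventually_atTop.1
    ((hH.eventually_ne_zero hf h0).and (hH.eventuallyDifferentiable hf))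
  have hc : ContinuousOn f (Set.Ici T) := fun t ht => (hT t ht).2.continuousAt.continuousWithinAt
  by_contra! h
  obtain ⟨a, ha, hfa⟩ := frequently_atTop.1 h.1 T
  obtain ⟨b, hb, hfb⟩ := frequently_atTop.1 h.2 T
  obtain ⟨t, ht, hft⟩ := isPreconnected_Ici.intermediate_value ha hb hc ⟨hfa.le, hfb.le⟩
  exact (hT t ht).1 hft

lemma tendsto_nhds_or_atTop_of_eventually_deriv_nonneg
    (hd : ∀ᶠ t in atTop, DifferentiableAt ℝ f t) (hd' : ∀ᶠ t in atTop, 0 ≤ deriv f t) :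
    (∃ c, Tendsto f atTop (𝓝 c)) ∨ Tendsto f atTop atTop := by
  obtain ⟨T, hT⟩ := eventually_atTop.1 (hd.and hd')
  have hmono : MonotoneOn f (Set.Ici T) :=
    monotoneOn_of_deriv_nonneg (convex_Ici T)
      (fun t ht => (hT t ht).1.continuousAt.continuousWithinAt)
      (fun t ht => (hT t (interior_subset ht)).1.differentiableWithinAt)
      (fun t ht => (hT t (interior_subset ht)).2)
  have hmono' : Monotone fun t => f (max t T) := fun s t hst =>
    hmono (le_max_right s T) (le_max_right t T) (max_le_max hst le_rfl)
  have heq : (fun t => f (max t T)) =ᶠ[atTop] f :=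
    (eventually_ge_atTop T).mono fun t ht => by simp [ht]
  rcases tendsto_atTop_of_monotone hmono' with h | ⟨c, h⟩
  · exact Or.inr (h.congr' heq)
  · exact Or.inl ⟨c, h.congr' heq⟩

lemma IsHardyField.tendsto_nhds_or_one_isLittleO (hH : IsHardyField H) (hf : f ∈ H) :
    (∃ c, Tendsto f atTop (𝓝 c)) ∨ (fun _ => (1 : ℝ)) =o[atTop] f := by
  simp only [isLittleO_one_left_iff, Real.norm_eq_abs]
  have hd := hH.eventuallyDifferentiable hf
  rcases hH.eventually_nonneg_or_nonpos (hH.deriv_mem hf) with h | h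
  · exact (tendsto_nhds_or_atTop_of_eventually_deriv_nonneg hd h).imp_right
      (tendsto_abs_atTop_atTop.comp ·)
  · have hd' : ∀ᶠ t in atTop, 0 ≤ deriv (-f) t := h.mono fun t ht => by simpa [deriv.neg']
    rcases tendsto_nhds_or_atTop_of_eventually_deriv_nonneg
      (hd.mono fun t ht => ht.neg) hd' with ⟨c, h⟩ | h
    · exact Or.inl ⟨-c, by simpa using h.neg⟩
    · exact Or.inr (by simpa [Function.comp_def] using tendsto_abs_atTop_atTop.comp h)

lemma IsHardyField.exists_sub_smul_isLittleO_or_isLittleO (hH : IsHardyField H) (hf : f ∈ H)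
    (hg : g ∈ H) (hg0 : ∀ᶠ t in atTop, g t ≠ 0) :
    (∃ c : ℝ, (f - c • g) =o[atTop] g) ∨ g =o[atTop] f := by
  have hg0' : ¬ g =ᶠ[atTop] fun _ => (0 : ℝ) := fun h =>
    (hg0.and h).exists.elim fun t ht => ht.1 ht.2
  have hfg : (fun t => f t / g t) ∈ H := by
    convert hH.mul_mem hf (hH.inv_mem hg hg0') using 1
    exact funext fun t => div_eq_mul_inv _ _
  have hmul {u v : ℝ → ℝ} (h : u =o[atTop] v) : (fun t => g t * u t) =o[atTop] fun t => g t * v t :=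
    (isBigO_refl g atTop).mul_isLittleO h
  rcases hH.tendsto_nhds_or_one_isLittleO hfg with ⟨c, hc⟩ | h
  · refine Or.inl ⟨c, (hmul ((isLittleO_one_iff ℝ).2 (by simpa using hc.sub_const c))).congr' ?_ ?_⟩
    · filter_upwards [hg0] with t ht
      simp only [Pi.sub_apply, Pi.smul_apply, smul_eq_mul]
      field_simp
    · simp
  · refine Or.inr ((hmul h).congr' ?_ ?_)
    · simp
    · filter_upwards [hg0] with t ht
      field_simp

end HardyLimits

lemma eventually_pow_ne_zero {𝕜 : Type*} [Field 𝕜] [LinearOrder 𝕜] [IsStrictOrderedRing 𝕜]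
    (d : ℕ) : ∀ᶠ t : 𝕜 in atTop, t ^ d ≠ 0 :=
  (eventually_gt_atTop 0).mono fun _ ht => pow_ne_zero d ht.ne'

lemma not_pow_isLittleO_pow_self {𝕜 : Type*} [NormedField 𝕜] [LinearOrder 𝕜]
    [IsStrictOrderedRing 𝕜] (d : ℕ) : ¬ (fun t : 𝕜 => t ^ d) =o[atTop] fun t => t ^ d :=
  isLittleO_irrefl (eventually_pow_ne_zero d).frequently

section PowerAsymptotics

variable {𝕜 : Type*} [NormedField 𝕜] [LinearOrder 𝕜] [IsStrictOrderedRing 𝕜] [OrderTopology 𝕜]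

lemma isBigO_pow_pow_atTop_of_le {a b : ℕ} (h : a ≤ b) :
    (fun t : 𝕜 => t ^ a) =O[atTop] fun t => t ^ b := by
  rcases h.eq_or_lt with rfl | h
  · exact isBigO_refl _ _
  · exact (isLittleO_pow_pow_atTop_of_lt h).isBigO

lemma Polynomial.isBigO_pow_natDegree (r : 𝕜[X]) :
    (fun t => r.eval t) =O[atTop] fun t => t ^ r.natDegree := by
  simpa using r.isBigO_atTop_of_degree_le (X ^ r.natDegree) (by simp [degree_le_natDegree])

lemma Polynomial.pow_natDegree_isBigO {r : 𝕜[X]} (hr : r ≠ 0) :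
    (fun t => t ^ r.natDegree) =O[atTop] fun t => r.eval t := by
  simpa using (X ^ r.natDegree).isBigO_atTop_of_degree_le r (by simp [degree_eq_natDegree hr])

end PowerAsymptotics

lemma tendsto_abs_div_atTop_of_isLittleO {f g : ℝ → ℝ} (h : g =o[atTop] f)
    (hg : ∀ᶠ t in atTop, g t ≠ 0) : Tendsto (fun t => |f t / g t|) atTop atTop := by
  have h1 : (fun _ => (1 : ℝ)) =o[atTop] fun t => f t / g t :=
    (h.mul_isBigO (isBigO_refl (fun t => (g t)⁻¹) atTop)).congr'
      (hg.mono fun t ht => mul_inv_cancel₀ ht) (.of_forall fun t => (div_eq_mul_inv _ _).symm)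
  simpa [abs_div] using (isLittleO_one_left_iff ℝ).1 h1

/-- The unbounded case of `StronglyNonPoly`, with `Prec` replaced by `=o` (which, unlike `Prec`,
is not satisfied by the junk quotient `x / 0 = 0`). -/
def StrictlyBetweenPowers (x : ℝ → ℝ) : Prop :=
  ∃ k : ℕ, (fun t => t ^ k) =o[atTop] x ∧ x =o[atTop] fun t => t ^ (k + 1)

namespace StrictlyBetweenPowers

variable {x : ℝ → ℝ}

lemma isLittleO_pow_or_pow_isLittleO (hx : StrictlyBetweenPowers x) (d : ℕ) :
    x =o[atTop] (fun t => t ^ d) ∨ (fun t => t ^ d) =o[atTop] x := by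
  obtain ⟨k, hk, hk1⟩ := hx
  rcases le_or_gt d k with h | h
  · exact Or.inr ((isBigO_pow_pow_atTop_of_le h).trans_isLittleO hk)
  · exact Or.inl (hk1.trans_isBigO (isBigO_pow_pow_atTop_of_le h))

lemma one_isLittleO (hx : StrictlyBetweenPowers x) : (fun _ => (1 : ℝ)) =o[atTop] x := by
  obtain ⟨k, hk, -⟩ := hx
  simpa using (isBigO_pow_pow_atTop_of_le k.zero_le).trans_isLittleO hk

lemma tendsto_abs_atTop (hx : StrictlyBetweenPowers x) : Tendsto (fun t => |x t|) atTop atTop :=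
  by simpa using (isLittleO_one_left_iff ℝ).1 hx.one_isLittleO

lemma eventually_ne_zero (hx : StrictlyBetweenPowers x) : ∀ᶠ t in atTop, x t ≠ 0 :=
  (hx.tendsto_abs_atTop.eventually_gt_atTop 0).mono fun _ ht => abs_pos.1 ht

lemma not_isLittleO_self (hx : StrictlyBetweenPowers x) : ¬ x =o[atTop] x :=
  isLittleO_irrefl hx.eventually_ne_zero.frequently

lemma stronglyNonPoly (hx : StrictlyBetweenPowers x) : StronglyNonPoly x :=
  Or.inl (hx.imp fun _ hk => ⟨hk.1.tendsto_div_nhds_zero, hk.2.tendsto_div_nhds_zero⟩)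

end StrictlyBetweenPowers

def polyPlusLittleO (z : ℝ → ℝ) : Submodule ℝ (ℝ → ℝ) where
  carrier := {f | ∃ q : ℝ[X], (fun t => f t - q.eval t) =o[atTop] z}
  add_mem' := by
    rintro f g ⟨p, hp⟩ ⟨q, hq⟩
    exact ⟨p + q, (hp.add hq).congr_left fun t => by simp; ring⟩
  zero_mem' := ⟨0, by simp⟩
  smul_mem' := by
    rintro c f ⟨p, hp⟩
    exact ⟨c • p, (hp.const_mul_left c).congr_left fun t => by simp; ring⟩

lemma polyEval_mem_polyPlusLittleO (q : ℝ[X]) (z : ℝ → ℝ) :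
    (fun t => q.eval t) ∈ polyPlusLittleO z :=
  ⟨q, by simp⟩

lemma mem_polyPlusLittleO_of_isLittleO {f z : ℝ → ℝ} (h : f =o[atTop] z) :
    f ∈ polyPlusLittleO z :=
  ⟨0, by simpa using h⟩

lemma mem_polyPlusLittleO_one_iff {f : ℝ → ℝ} :
    f ∈ polyPlusLittleO 1 ↔ ∃ q : ℝ[X], Tendsto (fun t => f t - q.eval t) atTop (𝓝 0) :=
  exists_congr fun _ => isLittleO_one_iff ℝ

/-- If `x = y + r` with `y = o(z)` and `r` a polynomial of degree `d`, then either `t ^ d ≺ z`, so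
that `r = o(z)` too, or `z ≺ t ^ d`, and then `x ≍ t ^ d`, which no `x` strictly between two
consecutive powers can satisfy. -/
lemma StrictlyBetweenPowers.isLittleO_of_mem_polyPlusLittleO {x z : ℝ → ℝ}
    (hx : StrictlyBetweenPowers x) (hz : StrictlyBetweenPowers z) (hxz : x ∈ polyPlusLittleO z) :
    x =o[atTop] z := by
  obtain ⟨r, hr⟩ := hxz
  rcases eq_or_ne r 0 with rfl | hr0
  · simpa using hr
  have hsplit : x = fun t => (x t - r.eval t) + r.eval t := by simp
  rcases hz.isLittleO_pow_or_pow_isLittleO r.natDegree with hzd | hdz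
  · exfalso
    have hyd := hr.trans hzd
    rcases hx.isLittleO_pow_or_pow_isLittleO r.natDegree with hxd | hdx
    · exact not_pow_isLittleO_pow_self _ ((r.pow_natDegree_isBigO hr0).trans_isLittleO
        ((hxd.sub hyd).congr_left fun t => by simp))
    · rw [hsplit] at hdx
      exact not_pow_isLittleO_pow_self _ (hdx.trans_isBigO (hyd.isBigO.add r.isBigO_pow_natDegree))
  · rw [hsplit]
    exact hr.add (r.isBigO_pow_natDegree.trans_isLittleO hdz)

def IsHardyField.toSubalgebra {H : Set (ℝ → ℝ)} (hH : IsHardyField H)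
    (hconst : ∀ c : ℝ, (fun _ => c) ∈ H) : Subalgebra ℝ (ℝ → ℝ) where
  carrier := H
  mul_mem' := hH.mul_mem
  add_mem' := hH.add_mem
  algebraMap_mem' := hconst

lemma IsHardyField.exists_forall_sub_smul_isLittleO {H : Set (ℝ → ℝ)} (hH : IsHardyField H)
    {ι : Type*} [Finite ι] [Nonempty ι] {x : ι → ℝ → ℝ} (hxH : ∀ i, x i ∈ H)
    (hx0 : ∀ i, ∀ᶠ t in atTop, x i t ≠ 0) :
    ∃ i₀, ∀ i, ∃ c : ℝ, (x i - c • x i₀) =o[atTop] x i₀ := by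
  let r : ι → ι → Prop := fun i j => x j =o[atTop] x i
  have : IsTrans ι r := ⟨fun _ _ _ h₁ h₂ => h₂.trans h₁⟩
  have : Std.Irrefl r := ⟨fun i => isLittleO_irrefl (hx0 i).frequently⟩
  obtain ⟨i₀, -, hi₀⟩ := (Finite.wellFounded_of_trans_of_irrefl r).has_min Set.univ
    ⟨Classical.arbitrary ι, trivial⟩
  exact ⟨i₀, fun i => (hH.exists_sub_smul_isLittleO_or_isLittleO (hxH i) (hxH i₀)
    (hx0 i₀)).resolve_right (hi₀ i trivial)⟩

def IsNonPolyPart (S : Subalgebra ℝ (ℝ → ℝ)) (f x : ℝ → ℝ) : Prop :=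
  x ∈ S ∧ StrictlyBetweenPowers x ∧ ∃ q : ℝ[X], ∀ t, f t = q.eval t + x t

namespace IsNonPolyPart

variable {S : Subalgebra ℝ (ℝ → ℝ)} {f x z : ℝ → ℝ}

lemma sub_mem_polyPlusLittleO (hx : IsNonPolyPart S f x) (z : ℝ → ℝ) :
    f - x ∈ polyPlusLittleO z := by
  obtain ⟨-, -, q, hq⟩ := hx
  convert polyEval_mem_polyPlusLittleO q z using 1
  exact funext fun t => by simp [hq]

lemma isLittleO_of_mem_polyPlusLittleO (hx : IsNonPolyPart S f x) (hz : StrictlyBetweenPowers z)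
    (hf : f ∈ polyPlusLittleO z) : x =o[atTop] z :=
  hx.2.1.isLittleO_of_mem_polyPlusLittleO hz
    (by simpa using sub_mem hf (hx.sub_mem_polyPlusLittleO z))

lemma notMem_polyPlusLittleO (hx : IsNonPolyPart S f x) : f ∉ polyPlusLittleO x :=
  fun hf => hx.2.1.not_isLittleO_self (hx.isLittleO_of_mem_polyPlusLittleO hx.2.1 hf)

end IsNonPolyPart

lemma mem_polyPlusLittleO_one_or_exists_isNonPolyPart {S : Subalgebra ℝ (ℝ → ℝ)}
    (hS : IsHardyField (S : Set (ℝ → ℝ))) (hX : (fun t : ℝ => t) ∈ S) (K : ℕ) {f : ℝ → ℝ}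
    (hf : f ∈ S) (hfK : f =o[atTop] fun t => t ^ K) :
    f ∈ polyPlusLittleO 1 ∨ ∃ x, IsNonPolyPart S f x := by
  induction K generalizing f with
  | zero => exact Or.inl (mem_polyPlusLittleO_of_isLittleO (hfK.congr_right fun t => pow_zero t))
  | succ K ih =>
    have hpow : (fun t : ℝ => t ^ K) ∈ S := pow_mem hX K
    rcases hS.exists_sub_smul_isLittleO_or_isLittleO hf hpow (eventually_pow_ne_zero K)
      with ⟨c, hc⟩ | hKf
    · have hmon : f = (f - c • fun t => t ^ K) + fun t => (C c * X ^ K).eval t := by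
        ext t; simp
      rcases ih (sub_mem hf (S.smul_mem hpow c)) hc with h | ⟨x, hxS, hx, q, hq⟩
      · rw [hmon]
        exact Or.inl (add_mem h (polyEval_mem_polyPlusLittleO _ 1))
      · refine Or.inr ⟨x, hxS, hx, q + C c * X ^ K, fun t => ?_⟩
        have := hq t
        simp only [Pi.sub_apply, Pi.smul_apply, smul_eq_mul] at this
        simp only [eval_add, eval_mul, eval_C, eval_pow, eval_X]
        linarith
    · exact Or.inr ⟨f, hf, ⟨K, hKf, hfK⟩, 0, by simp⟩

section Basis

open Module Submodule

variable {S : Subalgebra ℝ (ℝ → ℝ)}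

lemma exists_isNonPolyPart_le_inf_sup_span (hS : IsHardyField (S : Set (ℝ → ℝ)))
    (hX : (fun t : ℝ => t) ∈ S) (K : ℕ) {U : Submodule ℝ (ℝ → ℝ)}
    (hUS : U ≤ Subalgebra.toSubmodule S) (hUK : ∀ f ∈ U, f =o[atTop] fun t => t ^ K)
    (hU1 : U ⊓ polyPlusLittleO 1 = ⊥) {ι : Type*} [Finite ι] [Nonempty ι] (b : Basis ι ℝ U) :
    ∃ f₀ z, f₀ ∈ U ∧ IsNonPolyPart S f₀ z ∧ U ≤ U ⊓ polyPlusLittleO z ⊔ ℝ ∙ f₀ := by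
  have hparts (i : ι) : ∃ x, IsNonPolyPart S (b i) x := by
    refine (mem_polyPlusLittleO_one_or_exists_isNonPolyPart hS hX K (hUS (b i).2)
      (hUK _ (b i).2)).resolve_left fun h => b.ne_zero i ?_
    have hmem : (b i : ℝ → ℝ) ∈ U ⊓ polyPlusLittleO 1 := ⟨(b i).2, h⟩
    rw [hU1, Submodule.mem_bot] at hmem
    exact Subtype.ext hmem
  choose x hx using hparts
  -- eliminate, from every basis vector, its component along the fastest growing `x i₀`
  obtain ⟨i₀, hi₀⟩ := hS.exists_forall_sub_smul_isLittleO (fun i => (hx i).1)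
    fun i => (hx i).2.1.eventually_ne_zero
  refine ⟨b i₀, x i₀, (b i₀).2, hx i₀, ?_⟩
  have hb (i : ι) : (b i : ℝ → ℝ) ∈ U ⊓ polyPlusLittleO (x i₀) ⊔ ℝ ∙ (b i₀ : ℝ → ℝ) := by
    obtain ⟨c, hc⟩ := hi₀ i
    have hdiff : (b i : ℝ → ℝ) - c • b i₀ ∈ polyPlusLittleO (x i₀) := by
      have hsplit : (b i : ℝ → ℝ) - c • b i₀
          = (x i - c • x i₀) + ((b i - x i) - c • (b i₀ - x i₀)) := by module
      rw [hsplit]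
      exact add_mem (mem_polyPlusLittleO_of_isLittleO hc) (sub_mem
        ((hx i).sub_mem_polyPlusLittleO _) (smul_mem _ c ((hx i₀).sub_mem_polyPlusLittleO _)))
    rw [← sub_add_cancel (b i : ℝ → ℝ) (c • b i₀)]
    exact add_mem (mem_sup_left ⟨sub_mem (b i).2 (smul_mem _ c (b i₀).2), hdiff⟩)
      (mem_sup_right (smul_mem _ c (mem_span_singleton_self _)))
  have hspan := map_span_le U.subtype (Set.range b) _ |>.2 (Set.forall_mem_range.2 hb)
  rwa [b.span_eq, map_subtype_top] at hspan


lemma finrank_sup_span_singleton_of_notMem {K V : Type*} [DivisionRing K] [AddCommGroup V]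
    [Module K V] {p : Submodule K V} [FiniteDimensional K p] {v : V} (hv : v ∉ p) :
    finrank K ↥(p ⊔ K ∙ v) = finrank K p + 1 := by
  have h := finrank_sup_add_finrank_inf_eq p (K ∙ v)
  rwa [(disjoint_span_singleton_of_notMem hv).eq_bot, finrank_bot, add_zero,
    finrank_span_singleton (ne_of_mem_of_not_mem p.zero_mem hv).symm] at h

theorem exists_linearIndependent_isNonPolyPart (hS : IsHardyField (S : Set (ℝ → ℝ)))
    (hX : (fun t : ℝ => t) ∈ S) (K n : ℕ) (U : Submodule ℝ (ℝ → ℝ)) [FiniteDimensional ℝ U]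
    (hn : finrank ℝ U = n) (hUS : U ≤ Subalgebra.toSubmodule S)
    (hUK : ∀ f ∈ U, f =o[atTop] fun t => t ^ K) (hU1 : U ⊓ polyPlusLittleO 1 = ⊥) :
    ∃ g x : Fin n → ℝ → ℝ, LinearIndependent ℝ g ∧ span ℝ (Set.range g) = U ∧
      (∀ j, IsNonPolyPart S (g j) (x j)) ∧
      Pairwise fun i j => x i =o[atTop] x j ∨ x j =o[atTop] x i := by
  induction n generalizing U with
  | zero =>
    refine ⟨Fin.elim0, Fin.elim0, linearIndependent_empty_type, ?_, Fin.rec0, Fin.rec0⟩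
    simp [(finrank_eq_zero.1 hn).symm]
  | succ n ih =>
    obtain ⟨f₀, z, hf₀, hz, hle⟩ := exists_isNonPolyPart_le_inf_sup_span hS hX K hUS hUK hU1
      (finBasisOfFinrankEq ℝ U hn)
    set U' := U ⊓ polyPlusLittleO z
    have hf₀U' : f₀ ∉ U' := fun h => hz.notMem_polyPlusLittleO h.2
    have hsup : U' ⊔ ℝ ∙ f₀ = U :=
      le_antisymm (sup_le inf_le_left ((span_singleton_le_iff_mem _ _).2 hf₀)) hle
    have hU' : finrank ℝ U' = n := by
      have := finrank_sup_span_singleton_of_notMem hf₀U'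
      rw [hsup, hn] at this
      omega
    obtain ⟨g, x, hli, hspan, hgx, hpair⟩ := ih U' hU' (inf_le_left.trans hUS)
      (fun f hf => hUK f hf.1) (le_bot_iff.1 (hU1 ▸ inf_le_inf_right _ inf_le_left))
    have hxz (j : Fin n) : x j =o[atTop] z :=
      (hgx j).isLittleO_of_mem_polyPlusLittleO hz.2.1 (hspan ▸ subset_span ⟨j, rfl⟩ : g j ∈ U').2
    refine ⟨Fin.cons f₀ g, Fin.cons z x, linearIndependent_finCons.2 ⟨hli, hspan ▸ hf₀U'⟩, ?_,
      Fin.cases hz hgx, ?_⟩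
    · rw [Fin.range_cons, span_insert, hspan, sup_comm, hsup]
    · intro i j hij
      cases i using Fin.cases <;> cases j using Fin.cases
      · exact absurd rfl hij
      · exact Or.inr (hxz _)
      · exact Or.inl (hxz _)
      · exact hpair (ne_of_apply_ne Fin.succ hij)

end Basis

lemma exists_le_inf_eq_bot_sup_eq {α : Type*} [Lattice α] [BoundedOrder α] [IsModularLattice α]
    [ComplementedLattice α] {a c : α} (h : a ≤ c) : ∃ b ≤ c, b ⊓ a = ⊥ ∧ b ⊔ a = c := by
  obtain ⟨b, hb⟩ := exists_isCompl a
  refine ⟨b ⊓ c, inf_le_right, le_bot_iff.1 (hb.inf_eq_bot ▸ inf_comm a b ▸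
    inf_le_inf_right a inf_le_left), ?_⟩
  rw [sup_comm, ← sup_inf_assoc_of_le b h, hb.sup_eq_top, top_inf_eq]

lemma PolyGrowth.isLittleO_pow {f : ℝ → ℝ} (hf : PolyGrowth f) :
    ∃ k : ℕ, f =o[atTop] fun t => t ^ k := by
  obtain ⟨k, -, hk⟩ := hf
  refine ⟨k, (isLittleO_iff_tendsto' ?_).2 hk⟩
  exact (eventually_pow_ne_zero k).mono fun _ ht h => absurd h ht

lemma exists_forall_mem_span_isLittleO_pow {ι : Type*} [Finite ι] {a : ι → ℝ → ℝ}
    (ha : ∀ i, PolyGrowth (a i)) :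
    ∃ K : ℕ, ∀ f ∈ Submodule.span ℝ (Set.range a), f =o[atTop] fun t => t ^ K := by
  choose k hk using fun i => (ha i).isLittleO_pow
  cases nonempty_fintype ι
  refine ⟨Finset.univ.sup k, fun f hf => ?_⟩
  induction hf using Submodule.span_induction with
  | mem f hf =>
    obtain ⟨i, rfl⟩ := hf
    exact (hk i).trans_isBigO (isBigO_pow_pow_atTop_of_le (Finset.le_sup (Finset.mem_univ i)))
  | zero => exact isLittleO_zero _ _
  | add f g _ _ hf hg => exact hf.add hg
  | smul c f _ hf => exact hf.const_mul_left c

/-- The real linear span of `a_1,...,a_k` admits a basis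
`(g_1,...,g_m, u_1,...,u_ℓ)` where each `u_i` is a real polynomial plus `o(1)`, each
`g_j` is a real polynomial plus a strongly non-polynomial `x_j ∈ H` with
`|x_j(t)| → +∞`, and the `x_j` have pairwise distinct growth rates. -/
theorem stmt_1 (H : Set (ℝ → ℝ)) (hH : IsHardyField H) (hLE : ContainsLE H)
    (k : ℕ) (a : Fin k → ℝ → ℝ) (ha : ∀ i, a i ∈ H) (hgr : ∀ i, PolyGrowth (a i)) :
    ∃ (m ℓ : ℕ) (g : Fin m → ℝ → ℝ) (u : Fin ℓ → ℝ → ℝ),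
      LinearIndependent ℝ (Sum.elim g u) ∧
      Submodule.span ℝ (Set.range (Sum.elim g u)) =
        Submodule.span ℝ (Set.range a) ∧
      (∀ i : Fin ℓ, ∃ p : Polynomial ℝ,
        Filter.Tendsto (fun t => u i t - p.eval t) Filter.atTop (nhds 0)) ∧
      ∃ x : Fin m → ℝ → ℝ,
        (∀ j, x j ∈ H ∧ StronglyNonPoly (x j) ∧
          Filter.Tendsto (fun t => |x j t|) Filter.atTop Filter.atTop ∧
          ∃ q : Polynomial ℝ, ∀ t, g j t = q.eval t + x j t) ∧
        ∀ i j, i ≠ j →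
          (Filter.Tendsto (fun t => x i t / x j t) Filter.atTop (nhds 0) ∨
            Filter.Tendsto (fun t => |x i t / x j t|) Filter.atTop Filter.atTop) := by
  let S := hH.toSubalgebra fun c => hLE _ (IsLE.const c)
  set V := Submodule.span ℝ (Set.range a)
  have hVS : V ≤ Subalgebra.toSubmodule S := Submodule.span_le.2 (Set.range_subset_iff.2 ha)
  obtain ⟨K, hVK⟩ := exists_forall_mem_span_isLittleO_pow hgr
  -- `W` is spanned by the `u i`, its complement `U` in `V` by the `g j`
  set W := V ⊓ polyPlusLittleO 1
  obtain ⟨U, hUV, hUW, hUW'⟩ := exists_le_inf_eq_bot_sup_eq (inf_le_left : W ≤ V)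
  have : FiniteDimensional ℝ V := FiniteDimensional.span_of_finite ℝ (Set.finite_range a)
  have : FiniteDimensional ℝ U := Submodule.finiteDimensional_of_le hUV
  have hU1 : U ⊓ polyPlusLittleO 1 = ⊥ := by rw [← hUW, ← inf_assoc, inf_of_le_left hUV]
  obtain ⟨g, x, hg, hgU, hgx, hx⟩ := exists_linearIndependent_isNonPolyPart (S := S) hH
    (hLE _ IsLE.id) K _ U rfl (hUV.trans hVS) (fun f hf => hVK f (hUV hf)) hU1
  let b := Module.finBasis ℝ W
  have hbW : Submodule.span ℝ (Set.range (W.subtype ∘ b)) = W := by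
    rw [Set.range_comp, Submodule.span_image, b.span_eq, Submodule.map_subtype_top]
  refine ⟨_, _, g, W.subtype ∘ b, ?_, ?_, fun i => mem_polyPlusLittleO_one_iff.1 (b i).2.2, x,
    fun j => ?_, fun i j hij => ?_⟩
  · exact hg.sum_type (b.linearIndependent.map' _ W.ker_subtype)
      (by rw [hgU, hbW]; exact disjoint_iff.2 hUW)
  · rw [Set.Sum.elim_range, Submodule.span_union, hgU, hbW, hUW']
  · obtain ⟨hxS, hxpow, hgq⟩ := hgx j
    exact ⟨hxS, hxpow.stronglyNonPoly, hxpow.tendsto_abs_atTop, hgq⟩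
  · exact (hx hij).imp IsLittleO.tendsto_div_nhds_zero
      fun h => tendsto_abs_div_atTop_of_isLittleO h (hgx j).2.1.eventually_ne_zero
end
end

section
/- Let H be a Hardy field containing ℒℰ and let f ∈ H be strongly non-polynomial with t^δ ≪ f(t) for some δ > 0. Then for all sufficiently large natural numbers k the class S(f,k) is non-empty. -/
open Filter MeasureTheory Topology

noncomputable section

/-- The class `S(f,k)`: all `g ∈ H` with `g(t) ≺ t`, such that the limit of
`g(t)·|f⁽ᵏ⁾(t)|^{1/k}` as `t → +∞` is nonzero (possibly `±∞`), and
`g(t) ≺ |f⁽ᵏ⁺¹⁾(t)|^{-1/(k+1)}`. -/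
def SClass (H : Set (ℝ → ℝ)) (f : ℝ → ℝ) (k : ℕ) : Set (ℝ → ℝ) :=
  {g | g ∈ H ∧ Prec g (fun t => t) ∧
    ((∃ c : ℝ, c ≠ 0 ∧ Filter.Tendsto
        (fun t => g t * |iteratedDeriv k f t| ^ ((k : ℝ)⁻¹)) Filter.atTop (nhds c)) ∨
      Filter.Tendsto (fun t => g t * |iteratedDeriv k f t| ^ ((k : ℝ)⁻¹))
        Filter.atTop Filter.atTop ∨
      Filter.Tendsto (fun t => g t * |iteratedDeriv k f t| ^ ((k : ℝ)⁻¹))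
        Filter.atTop Filter.atBot) ∧
    Prec g fun t => |iteratedDeriv (k + 1) f t| ^ (-(1 : ℝ) / (k + 1))}

/-!
Write `tpow b` for `t ↦ t ^ b`. An element of a Hardy field is eventually of constant sign
(`h * h⁻¹` is eventually continuous with values in `{0, 1}`), so every `h ∈ H` is comparable with
every power: `t ^ x ≪ h` or `h ≪ t ^ x`. A function squeezed between two powers therefore has a
growth exponent `a`, with `t ^ x ≪ h` for `x < a` and `h ≪ t ^ x` for `x > a`.

Since `h'` is eventually monotone, the mean value theorem on `[t / 2, t]` and `[t, 2 t]` turns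
`h ≪ t ^ b` into `h' ≪ t ^ (b - 1)`. Conversely, integrating shows that if `t ^ x ≪ h` for all
`x < c`, then `t ^ x ≪ h'` for all `x < c - 1`, unless `h` tends to a nonzero constant; for
`h = f^(k)` that would force `f ~ c t ^ k`, which strong non-polynomiality forbids. Hence `f^(k)`
has a growth exponent `a ≥ δ - k > -k`, and `f^(k+1) ≪ t ^ (x - 1)` for every `x > a`. Any `θ` with
`-a / k < θ < (1 - a) / (k + 1)` (a nonempty interval below `1` because `a > -k`) makes
`t ^ θ |f^(k)| ^ (1 / k) → ∞` and `t ^ θ |f^(k+1)| ^ (1 / (k + 1)) → 0`, so `t ^ θ ∈ S(f, k)` for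
every `k ≥ 1`.
-/

open Asymptotics Set

/-- `t ^ b`, written as `exp (log t * b)`: it agrees with `t ^ b` for `t > 0`, is positive and
obeys the exponent laws for every `t`, and is visibly a logarithmico-exponential function. -/
def tpow (b t : ℝ) : ℝ := Real.exp (Real.log t * b)

lemma tpow_pos (b t : ℝ) : 0 < tpow b t := Real.exp_pos _

@[simp]
lemma abs_tpow (b t : ℝ) : |tpow b t| = tpow b t := abs_of_pos (tpow_pos b t)

@[simp]
lemma tpow_zero (t : ℝ) : tpow 0 t = 1 := by simp [tpow]

lemma tpow_add (a b t : ℝ) : tpow (a + b) t = tpow a t * tpow b t := by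
  simp only [tpow, mul_add, Real.exp_add]

lemma tpow_rpow (a c t : ℝ) : tpow a t ^ c = tpow (a * c) t := by
  rw [tpow, ← Real.exp_mul, tpow, mul_assoc]

lemma tpow_eq_rpow {t : ℝ} (ht : 0 < t) (b : ℝ) : tpow b t = t ^ b := by
  rw [Real.rpow_def_of_pos ht, tpow]

lemma tpow_natCast {t : ℝ} (ht : 0 < t) (n : ℕ) : tpow n t = t ^ n := by
  rw [tpow_eq_rpow ht, Real.rpow_natCast]

lemma tpow_one {t : ℝ} (ht : 0 < t) : tpow 1 t = t := by
  rw [tpow_eq_rpow ht, Real.rpow_one]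

lemma tpow_mul_arg (b : ℝ) {c t : ℝ} (hc : 0 < c) (ht : 0 < t) :
    tpow b (c * t) = tpow b c * tpow b t := by
  rw [tpow, Real.log_mul hc.ne' ht.ne', add_mul, Real.exp_add, tpow, tpow]

lemma hasDerivAt_tpow_add_one (b : ℝ) {t : ℝ} (ht : 0 < t) :
    HasDerivAt (tpow (b + 1)) ((b + 1) * tpow b t) t := by
  refine ((Real.hasDerivAt_log ht.ne').mul_const (b + 1)).exp.congr_deriv ?_
  change tpow (b + 1) t * (t⁻¹ * (b + 1)) = _
  rw [tpow_add, tpow_one ht]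
  field_simp

lemma tendsto_tpow_atTop {b : ℝ} (hb : 0 < b) : Tendsto (tpow b) atTop atTop :=
  Real.tendsto_exp_atTop.comp (Real.tendsto_log_atTop.atTop_mul_const hb)

lemma tendsto_tpow_zero {b : ℝ} (hb : b < 0) : Tendsto (tpow b) atTop (𝓝 0) :=
  Real.tendsto_exp_atBot.comp (Real.tendsto_log_atTop.atTop_mul_const_of_neg hb)

lemma tpow_isLittleO_tpow {a b : ℝ} (hab : a < b) : tpow a =o[atTop] tpow b := by
  refine isLittleO_of_tendsto' (.of_forall fun t h => absurd h (tpow_pos b t).ne') ?_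
  refine (tendsto_tpow_zero (sub_neg.2 hab)).congr fun t => ?_
  rw [eq_div_iff (tpow_pos b t).ne', ← tpow_add, sub_add_cancel]

lemma tpow_isBigO_tpow {a b : ℝ} (hab : a ≤ b) : tpow a =O[atTop] tpow b := by
  rcases hab.lt_or_eq with hab | rfl
  · exact (tpow_isLittleO_tpow hab).isBigO
  · exact isBigO_refl _ _

lemma not_tpow_isLittleO_tpow (b : ℝ) : ¬tpow b =o[atTop] tpow b :=
  isLittleO_irrefl' (.of_forall fun t => by simp [(tpow_pos b t).ne'])

lemma le_of_tpow_isBigO_tpow {a b : ℝ} (h : tpow a =O[atTop] tpow b) : a ≤ b := by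
  by_contra! hba
  exact not_tpow_isLittleO_tpow b ((tpow_isLittleO_tpow hba).trans_isBigO h)

lemma tpow_mem {H : Set (ℝ → ℝ)} (hLE : ContainsLE H) (b : ℝ) : tpow b ∈ H :=
  hLE _ (.exp (.mul (.log .id) (.const b)))

lemma isBigO_comp_mul_tpow {h : ℝ → ℝ} {b c : ℝ} (hc : 0 < c) (hb : h =O[atTop] tpow b) :
    (fun t => h (c * t)) =O[atTop] tpow b := by
  refine (hb.comp_tendsto (tendsto_id.const_mul_atTop hc)).trans
    (IsBigO.of_bound (tpow b c) ((eventually_gt_atTop 0).mono fun t ht => ?_))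
  simp [tpow_mul_arg b hc ht]

lemma tendsto_tpow_mul_abs_rpow_atTop {h : ℝ → ℝ} {θ a r : ℝ} (hr : 0 < r)
    (hlo : tpow a =O[atTop] h) (hpos : 0 < θ + a * r) :
    Tendsto (fun t => tpow θ t * |h t| ^ r) atTop atTop := by
  have hO : (fun t => tpow θ t * tpow a t ^ r) =O[atTop] fun t => tpow θ t * |h t| ^ r :=
    (isBigO_refl _ _).mul (hlo.abs_right.rpow hr.le (.of_forall fun _ => abs_nonneg _))
  refine (hO.trans_tendsto_norm_atTop ?_).congr fun t => ?_
  · simpa [tpow_rpow, ← tpow_add] using tendsto_tpow_atTop hpos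
  · exact Real.norm_of_nonneg (mul_nonneg (tpow_pos θ t).le (Real.rpow_nonneg (abs_nonneg _) r))

lemma tendsto_tpow_mul_abs_rpow_zero {h : ℝ → ℝ} {θ b r : ℝ} (hr : 0 ≤ r)
    (hup : h =O[atTop] tpow b) (hneg : θ + b * r < 0) :
    Tendsto (fun t => tpow θ t * |h t| ^ r) atTop (𝓝 0) := by
  have hO : (fun t => tpow θ t * |h t| ^ r) =O[atTop] fun t => tpow θ t * tpow b t ^ r :=
    (isBigO_refl _ _).mul (hup.abs_left.rpow hr (.of_forall fun t => (tpow_pos b t).le))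
  exact hO.trans_tendsto (by simpa [tpow_rpow, ← tpow_add] using tendsto_tpow_zero hneg)

lemma abs_sub_le_of_abs_deriv_le_tpow {h : ℝ → ℝ} {C b s t : ℝ} (hb : b + 1 ≠ 0) (hs : 0 < s)
    (hst : s ≤ t) (hdiff : ∀ x ∈ Icc s t, DifferentiableAt ℝ h x)
    (hbound : ∀ x ∈ Icc s t, |deriv h x| ≤ C * tpow b x) :
    |h t - h s| ≤ C / (b + 1) * (tpow (b + 1) t - tpow (b + 1) s) := by
  have hB : ∀ x, 0 < x → HasDerivAt (fun y => C / (b + 1) * (tpow (b + 1) y - tpow (b + 1) s))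
      (C * tpow b x) x := fun x hx => by
    refine (((hasDerivAt_tpow_add_one b hx).sub_const (tpow (b + 1) s)).const_mul
      (C / (b + 1))).congr_deriv ?_
    field_simp
  have := image_norm_le_of_norm_deriv_right_le_deriv_boundary' (f := fun x => h x - h s)
    (fun x hx => ((hdiff x hx).sub_const _).continuousAt.continuousWithinAt)
    (fun x hx => ((hdiff x (Ico_subset_Icc_self hx)).hasDerivAt.sub_const (h s)).hasDerivWithinAt)
    (by simp) (fun x hx => (hB x (hs.trans_le hx.1)).continuousAt.continuousWithinAt)
    (fun x hx => (hB x (hs.trans_le hx.1)).hasDerivWithinAt)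
    (fun x hx => hbound x (Ico_subset_Icc_self hx)) ⟨hst, le_rfl⟩
  simpa using this

lemma isLittleO_tpow_of_deriv {h : ℝ → ℝ} {b : ℝ} (hb : 0 < b + 1)
    (hdiff : ∀ᶠ t in atTop, DifferentiableAt ℝ h t) (hd : deriv h =o[atTop] tpow b) :
    h =o[atTop] tpow (b + 1) := by
  refine isLittleO_iff.2 fun ε hε => ?_
  have hε' : 0 < ε * (b + 1) / 2 := by positivity
  obtain ⟨T, hT⟩ := eventually_atTop.1
    ((isLittleO_iff.1 hd hε').and (hdiff.and (eventually_ge_atTop 1)))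
  filter_upwards [eventually_ge_atTop T,
    (tendsto_tpow_atTop hb).eventually_ge_atTop (2 * |h T| / ε)] with t ht hlarge
  have hosc := abs_sub_le_of_abs_deriv_le_tpow hb.ne' (by linarith [(hT T le_rfl).2.2]) ht
    (fun x hx => (hT x hx.1).2.1) (fun x hx => by simpa using (hT x hx.1).1)
  rw [show ε * (b + 1) / 2 / (b + 1) = ε / 2 by field_simp] at hosc
  rw [div_le_iff₀ hε] at hlarge
  simp only [Real.norm_eq_abs, abs_tpow]
  nlinarith [abs_sub_abs_le_abs_sub (h t) (h T), mul_pos hε (tpow_pos (b + 1) T)]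

lemma exists_tendsto_of_deriv_isBigO {h : ℝ → ℝ} {b : ℝ} (hb : b + 1 < 0)
    (hdiff : ∀ᶠ t in atTop, DifferentiableAt ℝ h t) (hd : deriv h =O[atTop] tpow b) :
    ∃ L, Tendsto h atTop (𝓝 L) ∧ (fun t => h t - L) =O[atTop] tpow (b + 1) := by
  obtain ⟨C, hC, hCev⟩ := isBigO_iff'.1 hd
  obtain ⟨T, hT⟩ := eventually_atTop.1 (hCev.and (hdiff.and (eventually_ge_atTop 1)))
  have hK : 0 < C / -(b + 1) := div_pos hC (neg_pos.2 hb)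
  have hosc : ∀ s t, T ≤ s → s ≤ t → |h t - h s| ≤ C / -(b + 1) * tpow (b + 1) s := by
    intro s t hs hst
    have := abs_sub_le_of_abs_deriv_le_tpow hb.ne (by linarith [(hT T le_rfl).2.2]) hst
      (fun x hx => (hT x (hs.trans hx.1)).2.1) (fun x hx => by simpa using (hT x (hs.trans hx.1)).1)
    rw [show C / (b + 1) * (tpow (b + 1) t - tpow (b + 1) s)
      = C / -(b + 1) * tpow (b + 1) s - C / -(b + 1) * tpow (b + 1) t by rw [div_neg]; ring] at this
    nlinarith [mul_pos hK (tpow_pos (b + 1) t)]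
  have hcauchy : CauchySeq h := by
    refine Metric.cauchySeq_iff'.2 fun ε hε => ?_
    obtain ⟨N, hN⟩ := eventually_atTop.1 ((tendsto_tpow_zero hb).eventually
      (gt_mem_nhds (div_pos hε hK)))
    refine ⟨max N T, fun n hn => ?_⟩
    have := hN (max N T) (le_max_left _ _)
    rw [lt_div_iff₀ hK] at this
    rw [Real.dist_eq]
    linarith [hosc _ n (le_max_right _ _) hn]
  obtain ⟨L, hL⟩ := cauchySeq_tendsto_of_complete hcauchy
  refine ⟨L, hL, isBigO_iff'.2 ⟨_, hK, ?_⟩⟩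
  filter_upwards [eventually_ge_atTop T] with s hs
  have := le_of_tendsto (hL.sub_const (h s)).abs (eventually_atTop.2 ⟨s, fun t => hosc s t hs⟩)
  simpa [abs_sub_comm] using this

lemma abs_deriv_le_of_monotoneOn_or_antitoneOn {h : ℝ → ℝ} {T t : ℝ} (hT : 0 < T)
    (hdiff : ∀ x ∈ Ici T, DifferentiableAt ℝ h x)
    (hmono : MonotoneOn (deriv h) (Ici T) ∨ AntitoneOn (deriv h) (Ici T)) (ht : 2 * T ≤ t) :
    |deriv h t| ≤ 2 * (|h (t / 2)| + |h t| + |h (2 * t)|) / t := by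
  have htpos : 0 < t := by linarith
  have hslope : ∀ a b, T ≤ a → a < b → ∃ ξ ∈ Ioo a b, deriv h ξ = (h b - h a) / (b - a) :=
    fun a b ha hab => exists_deriv_eq_slope h hab
      (fun x hx => (hdiff x (ha.trans hx.1)).continuousAt.continuousWithinAt)
      (fun x hx => (hdiff x (ha.trans hx.1.le)).differentiableWithinAt)
  obtain ⟨ξ₁, hξ₁, hs₁⟩ := hslope (t / 2) t (by linarith) (by linarith)
  obtain ⟨ξ₂, hξ₂, hs₂⟩ := hslope t (2 * t) (by linarith) (by linarith)
  have hmem : ∀ x, t / 2 ≤ x → x ∈ Ici T := fun x hx => mem_Ici.2 (by linarith)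
  have hbetween : |deriv h t| ≤ max |deriv h ξ₁| |deriv h ξ₂| := by
    have h₁ := hmem ξ₁ hξ₁.1.le
    have h₂ := hmem ξ₂ (by linarith [hξ₂.1])
    have h₀ := hmem t (by linarith)
    rcases hmono with hm | hm
    · exact abs_le_max_abs_abs (hm h₁ h₀ hξ₁.2.le) (hm h₀ h₂ hξ₂.1.le)
    · rw [max_comm]
      exact abs_le_max_abs_abs (hm h₀ h₂ hξ₂.1.le) (hm h₁ h₀ hξ₁.2.le)
  refine hbetween.trans (max_le ?_ ?_)
  · rw [hs₁, abs_div, abs_of_pos (by linarith : 0 < t - t / 2),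
      show t - t / 2 = t / 2 by ring, div_div_eq_mul_div, mul_comm]
    gcongr
    linarith [abs_sub (h t) (h (t / 2)), abs_nonneg (h (2 * t))]
  · rw [hs₂, abs_div, abs_of_pos (by linarith : 0 < 2 * t - t), show 2 * t - t = t by ring]
    gcongr
    linarith [abs_sub (h (2 * t)) (h t), abs_nonneg (h (t / 2)), abs_nonneg (h t),
      abs_nonneg (h (2 * t))]

lemma eventually_lt_or_eventually_gt {p : ℝ → ℝ} {c : ℝ}
    (hcont : ∀ᶠ t in atTop, ContinuousAt p t) (hne : ∀ᶠ t in atTop, p t ≠ c) :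
    (∀ᶠ t in atTop, p t < c) ∨ ∀ᶠ t in atTop, c < p t := by
  obtain ⟨T, hT⟩ := eventually_atTop.1 (hcont.and hne)
  have hmiss : ∀ s ∈ Ici T, ∀ t ∈ Ici T, c ∉ Icc (p s) (p t) := fun s hs t ht hc => by
    obtain ⟨x, hx, hpx⟩ := isPreconnected_Ici.intermediate_value hs ht
      (fun x hx => (hT x hx).1.continuousWithinAt) hc
    exact (hT x hx).2 hpx
  rcases (hT T le_rfl).2.lt_or_gt with hlt | hgt
  · refine .inl ((eventually_ge_atTop T).mono fun t ht => ?_)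
    by_contra! hct
    exact hmiss T self_mem_Ici t ht ⟨hlt.le, hct⟩
  · refine .inr ((eventually_ge_atTop T).mono fun t ht => ?_)
    by_contra! hct
    exact hmiss t ht T self_mem_Ici ⟨hct, hgt.le⟩

lemma Dom.isBigO {f g : ℝ → ℝ} (h : Dom f g) : f =O[atTop] g :=
  let ⟨C, hC, hCev⟩ := h
  isBigO_iff'.2 ⟨C, hC, by simpa using hCev⟩

lemma StronglyNonPoly.exists_tpow_isLittleO {f : ℝ → ℝ} {δ : ℝ} (hsnp : StronglyNonPoly f)
    (hδ : 0 < δ) (hlow : tpow δ =O[atTop] f) :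
    ∃ k₀ : ℕ, tpow k₀ =o[atTop] f ∧ f =o[atTop] tpow (k₀ + 1) := by
  have hpow : ∀ n : ℕ, (fun t : ℝ => t ^ n) =ᶠ[atTop] tpow n := fun n =>
    (eventually_gt_atTop 0).mono fun t ht => (tpow_natCast ht n).symm
  rcases hsnp with ⟨k₀, hlo, hup⟩ | hzero
  · have hne : ∀ᶠ t in atTop, f t ≠ 0 :=
      hlow.eq_zero_imp.mono fun t ht h0 => (tpow_pos δ t).ne' (ht h0)
    refine ⟨k₀, ?_, ?_⟩
    · exact (isLittleO_of_tendsto' (hne.mono fun t ht h0 => absurd h0 ht) hlo).congr'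
        (hpow k₀) EventuallyEq.rfl
    · have := (isLittleO_of_tendsto' ((eventually_gt_atTop 0).mono fun t ht h0 =>
        absurd h0 (pow_pos ht _).ne') hup).congr' EventuallyEq.rfl (hpow (k₀ + 1))
      simpa using this
  · exact absurd (hlow.trans_tendsto hzero)
      (not_tendsto_nhds_of_tendsto_atTop (tendsto_tpow_atTop hδ) 0)

namespace IsHardyField

variable {H : Set (ℝ → ℝ)} {h : ℝ → ℝ}

lemma iteratedDeriv_mem (hH : IsHardyField H) (hh : h ∈ H) (k : ℕ) :
    iteratedDeriv k h ∈ H := by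
  induction k with
  | zero => simpa using hh
  | succ k ih => simpa [iteratedDeriv_succ] using hH.deriv_mem ih

lemma eventually_continuousAt (hH : IsHardyField H) (hh : h ∈ H) :
    ∀ᶠ t in atTop, ContinuousAt h t :=
  (hH.eventuallyDifferentiable hh).mono fun _ ht => ht.continuousAt

lemma eventuallyEq_zero_or_eventually_ne_zero (hH : IsHardyField H) (hh : h ∈ H) :
    (h =ᶠ[atTop] fun _ => (0 : ℝ)) ∨ ∀ᶠ t in atTop, h t ≠ 0 := by
  by_cases h0 : h =ᶠ[atTop] fun _ => (0 : ℝ)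
  · exact .inl h0
  have hp : (fun t => h t * (h t)⁻¹) ∈ H := hH.mul_mem hh (hH.inv_mem hh h0)
  have hvals : ∀ t, h t * (h t)⁻¹ = if h t = 0 then 0 else 1 := fun t => by
    split_ifs with ht <;> simp [ht]
  rcases eventually_lt_or_eventually_gt (c := 1 / 2) (hH.eventually_continuousAt hp)
    (.of_forall fun t => by rw [hvals]; split_ifs <;> norm_num) with hlt | hgt
  · refine absurd (hlt.mono fun t ht => ?_) h0
    rw [hvals] at ht
    split_ifs at ht with h0t
    · exact h0t
    · norm_num at ht
  · refine .inr (hgt.mono fun t ht h0t => ?_)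
    rw [hvals, if_pos h0t] at ht
    norm_num at ht

lemma eventually_nonneg_or_nonpos_s5 (hH : IsHardyField H) (hh : h ∈ H) :
    (∀ᶠ t in atTop, 0 ≤ h t) ∨ ∀ᶠ t in atTop, h t ≤ 0 := by
  rcases hH.eventuallyEq_zero_or_eventually_ne_zero hh with h0 | hne
  · exact .inl (h0.mono fun _ ht => ht.ge)
  · rcases eventually_lt_or_eventually_gt (hH.eventually_continuousAt hh) hne with hlt | hgt
    · exact .inr (hlt.mono fun _ => le_of_lt)
    · exact .inl (hgt.mono fun _ => le_of_lt)

lemma exists_monotoneOn_or_antitoneOn (hH : IsHardyField H) (hh : h ∈ H) :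
    ∃ T, MonotoneOn h (Ici T) ∨ AntitoneOn h (Ici T) := by
  have hdiff := hH.eventuallyDifferentiable hh
  rcases hH.eventually_nonneg_or_nonpos_s5 (hH.deriv_mem hh) with hpos | hneg
  · obtain ⟨T, hT⟩ := eventually_atTop.1 (hdiff.and hpos)
    exact ⟨T, .inl (monotoneOn_of_deriv_nonneg (convex_Ici T)
      (fun x hx => (hT x hx).1.continuousAt.continuousWithinAt)
      (fun x hx => (hT x (interior_subset hx)).1.differentiableWithinAt)
      fun x hx => (hT x (interior_subset hx)).2)⟩
  · obtain ⟨T, hT⟩ := eventually_atTop.1 (hdiff.and hneg)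
    exact ⟨T, .inr (antitoneOn_of_deriv_nonpos (convex_Ici T)
      (fun x hx => (hT x hx).1.continuousAt.continuousWithinAt)
      (fun x hx => (hT x (interior_subset hx)).1.differentiableWithinAt)
      fun x hx => (hT x (interior_subset hx)).2)⟩

lemma isBigO_one_or_one_isBigO (hH : IsHardyField H) (hh : h ∈ H) :
    h =O[atTop] (fun _ => (1 : ℝ)) ∨ (fun _ => (1 : ℝ)) =O[atTop] h := by
  have hsq : h * h + -(fun _ => (1 : ℝ)) ∈ H :=
    hH.add_mem (hH.mul_mem hh hh) (hH.neg_mem hH.one_mem)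
  rcases hH.eventually_nonneg_or_nonpos_s5 hsq with hge | hle
  · refine .inr (IsBigO.of_bound 1 (hge.mono fun t ht => ?_))
    simpa [← one_le_sq_iff_one_le_abs, sq] using ht
  · refine .inl (IsBigO.of_bound 1 (hle.mono fun t ht => ?_))
    simpa [← sq_le_one_iff_abs_le_one, sq] using ht

lemma tpow_isBigO_or_isBigO_tpow (hH : IsHardyField H) (hLE : ContainsLE H) (hh : h ∈ H)
    (x : ℝ) : tpow x =O[atTop] h ∨ h =O[atTop] tpow x := by
  have hr : (fun t => h t * (tpow x t)⁻¹) ∈ H := hH.mul_mem hh (hH.inv_mem (tpow_mem hLE x)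
    fun h0 => by obtain ⟨t, ht⟩ := h0.exists; exact (tpow_pos x t).ne' ht)
  have hcancel : ∀ t, h t * (tpow x t)⁻¹ * tpow x t = h t := fun t =>
    inv_mul_cancel_right₀ (tpow_pos x t).ne' _
  rcases hH.isBigO_one_or_one_isBigO hr with hO | hO
  · exact .inr (by simpa [hcancel] using hO.mul (isBigO_refl (tpow x) atTop))
  · exact .inl (by simpa [hcancel] using hO.mul (isBigO_refl (tpow x) atTop))

lemma exists_growth_exponent (hH : IsHardyField H) (hLE : ContainsLE H) (hh : h ∈ H)
    {c b : ℝ} (hlow : ∀ x < c, tpow x =O[atTop] h) (hup : h =O[atTop] tpow b) :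
    ∃ a, c ≤ a ∧ (∀ x < a, tpow x =O[atTop] h) ∧ ∀ x, a < x → h =O[atTop] tpow x := by
  set S := {x | tpow x =O[atTop] h}
  have hbdd : BddAbove S := ⟨b, fun x hx => le_of_tpow_isBigO_tpow (hx.trans hup)⟩
  have hne : S.Nonempty := ⟨c - 1, hlow _ (by linarith)⟩
  refine ⟨sSup S, le_of_forall_lt_imp_le_of_dense fun x hx => le_csSup hbdd (hlow x hx),
    fun x hx => ?_, fun x hx => ?_⟩
  · obtain ⟨y, hy, hxy⟩ := exists_lt_of_lt_csSup hne hx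
    exact (tpow_isBigO_tpow hxy.le).trans hy
  · exact (hH.tpow_isBigO_or_isBigO_tpow hLE hh x).resolve_left fun hx' =>
      (le_csSup hbdd hx').not_gt hx

lemma eventually_abs_deriv_le (hH : IsHardyField H) (hh : h ∈ H) :
    ∀ᶠ t in atTop, |deriv h t| ≤ 2 * (|h (t / 2)| + |h t| + |h (2 * t)|) / t := by
  obtain ⟨T₁, hT₁⟩ := hH.exists_monotoneOn_or_antitoneOn (hH.deriv_mem hh)
  obtain ⟨T₂, hT₂⟩ := eventually_atTop.1 (hH.eventuallyDifferentiable hh)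
  have hsub : Ici (max 1 (max T₁ T₂)) ⊆ Ici T₁ := Ici_subset_Ici.2 (by simp)
  filter_upwards [eventually_ge_atTop (2 * max 1 (max T₁ T₂))] with t ht
  exact abs_deriv_le_of_monotoneOn_or_antitoneOn (by positivity)
    (fun x hx => hT₂ x (le_trans (by simp) hx)) (hT₁.imp (·.mono hsub) (·.mono hsub)) ht

lemma deriv_isBigO_tpow (hH : IsHardyField H) (hh : h ∈ H) {b : ℝ}
    (hb : h =O[atTop] tpow b) : deriv h =O[atTop] tpow (b - 1) := by
  have hhalf : (fun t => h (t / 2)) =O[atTop] tpow b := by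
    simpa only [div_eq_inv_mul] using isBigO_comp_mul_tpow (by norm_num) hb
  have hsum : (fun t => 2 * (|h (t / 2)| + |h t| + |h (2 * t)|)) =O[atTop] tpow b :=
    ((hhalf.abs_left.add hb.abs_left).add
      (isBigO_comp_mul_tpow two_pos hb).abs_left).const_mul_left 2
  have hbound : deriv h =O[atTop]
      fun t => 2 * (|h (t / 2)| + |h t| + |h (2 * t)|) * tpow (-1) t := by
    refine IsBigO.of_bound 1 ?_
    filter_upwards [hH.eventually_abs_deriv_le hh, eventually_gt_atTop 0] with t ht htpos
    rw [tpow_eq_rpow htpos, Real.rpow_neg_one, ← div_eq_mul_inv]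
    have hS : 0 ≤ |h (t / 2)| + |h t| + |h (2 * t)| := by positivity
    simpa [abs_of_pos htpos, abs_of_nonneg hS] using ht
  simpa [← tpow_add, ← sub_eq_add_neg] using
    hbound.trans (hsum.mul (isBigO_refl (tpow (-1)) atTop))

lemma iteratedDeriv_isBigO_tpow (hH : IsHardyField H) (hh : h ∈ H) {b : ℝ}
    (hb : h =O[atTop] tpow b) (k : ℕ) : iteratedDeriv k h =O[atTop] tpow (b - k) := by
  induction k with
  | zero => simpa using hb
  | succ k ih =>
    rw [iteratedDeriv_succ, Nat.cast_succ, ← sub_sub]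
    exact hH.deriv_isBigO_tpow (hH.iteratedDeriv_mem hh k) ih

lemma isLittleO_sub_of_tendsto_iteratedDeriv (hH : IsHardyField H) {k : ℕ} :
    ∀ {h : ℝ → ℝ}, h ∈ H → ∀ {L : ℝ}, Tendsto (iteratedDeriv k h) atTop (𝓝 L) →
      (fun t => h t - L / k.factorial * tpow k t) =o[atTop] tpow k := by
  induction k with
  | zero =>
    intro h _ L hL
    have hone : tpow 0 = fun _ => (1 : ℝ) := funext tpow_zero
    simpa [hone, tendsto_sub_nhds_zero_iff] using hL
  | succ k ih =>
    intro h hh L hL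
    rw [iteratedDeriv_succ'] at hL
    set g := fun t => h t - L / (k + 1).factorial * tpow (k + 1) t
    have hderiv : deriv g =ᶠ[atTop] fun t => deriv h t - L / k.factorial * tpow k t := by
      filter_upwards [hH.eventuallyDifferentiable hh, eventually_gt_atTop 0] with t hdt ht
      refine (hdt.hasDerivAt.sub ((hasDerivAt_tpow_add_one _ ht).const_mul _)).deriv.trans ?_
      rw [Nat.factorial_succ]
      push_cast
      field_simp
    have hdiff : ∀ᶠ t in atTop, DifferentiableAt ℝ g t := by
      filter_upwards [hH.eventuallyDifferentiable hh, eventually_gt_atTop 0] with t hdt ht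
      exact hdt.sub ((hasDerivAt_tpow_add_one _ ht).differentiableAt.const_mul _)
    push_cast
    exact isLittleO_tpow_of_deriv (by positivity) hdiff
      ((ih (hH.deriv_mem hh) hL).congr' hderiv.symm EventuallyEq.rfl)

lemma not_tendsto_iteratedDeriv (hH : IsHardyField H) (hh : h ∈ H) {k₀ : ℕ}
    (hlo : tpow k₀ =o[atTop] h) (hup : h =o[atTop] tpow (k₀ + 1)) (k : ℕ) {L : ℝ}
    (hL : L ≠ 0) : ¬Tendsto (iteratedDeriv k h) atTop (𝓝 L) := by
  intro hlim
  have hc : L / k.factorial ≠ 0 := div_ne_zero hL (by positivity)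
  have hequiv : h ~[atTop] fun t => L / k.factorial * tpow k t :=
    (hH.isLittleO_sub_of_tendsto_iteratedDeriv hh hlim).trans_isBigO (isBigO_self_const_mul hc _ _)
  have hΘ : h =Θ[atTop] tpow k := hequiv.isTheta.trans ((isTheta_refl _ _).const_mul_left hc)
  rcases le_or_gt k k₀ with hk | hk
  · exact not_tpow_isLittleO_tpow _
      ((hlo.trans_isBigO hΘ.isBigO).trans_isBigO (tpow_isBigO_tpow (by exact_mod_cast hk)))
  · exact not_tpow_isLittleO_tpow _
      (((tpow_isBigO_tpow (by exact_mod_cast hk)).trans hΘ.symm.isBigO).trans_isLittleO hup)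

lemma tpow_isBigO_deriv (hH : IsHardyField H) (hLE : ContainsLE H) (hh : h ∈ H) {c : ℝ}
    (hlow : ∀ x < c, tpow x =O[atTop] h) (hlim : ∀ L ≠ 0, ¬Tendsto h atTop (𝓝 L))
    {x : ℝ} (hx : x < c - 1) : tpow x =O[atTop] deriv h := by
  refine (hH.tpow_isBigO_or_isBigO_tpow hLE (hH.deriv_mem hh) x).resolve_right fun hO => ?_
  obtain ⟨y, hxy, hyc⟩ := exists_between hx
  have hsmall : h =o[atTop] tpow (y + 1) := by
    rcases lt_or_ge 0 (y + 1) with hy | hy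
    · exact isLittleO_tpow_of_deriv hy (hH.eventuallyDifferentiable hh)
        (hO.trans_isLittleO (tpow_isLittleO_tpow hxy))
    · obtain ⟨L, hL, hLO⟩ :=
        exists_tendsto_of_deriv_isBigO (by linarith) (hH.eventuallyDifferentiable hh) hO
      obtain rfl : L = 0 := by_contra fun hL0 => hlim L hL0 hL
      simpa using hLO.trans_isLittleO (tpow_isLittleO_tpow (by linarith : x + 1 < y + 1))
  exact not_tpow_isLittleO_tpow _ ((hlow (y + 1) (by linarith)).trans_isLittleO hsmall)

lemma tpow_isBigO_iteratedDeriv (hH : IsHardyField H) (hLE : ContainsLE H) (hh : h ∈ H)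
    {c : ℝ} (hlow : ∀ x < c, tpow x =O[atTop] h)
    (hlim : ∀ k L, L ≠ 0 → ¬Tendsto (iteratedDeriv k h) atTop (𝓝 L)) (k : ℕ) :
    ∀ x < c - k, tpow x =O[atTop] iteratedDeriv k h := by
  induction k with
  | zero => simpa using hlow
  | succ k ih =>
    intro x hx
    rw [iteratedDeriv_succ]
    exact hH.tpow_isBigO_deriv hLE (hH.iteratedDeriv_mem hh k) ih (hlim k)
      (by push_cast at hx; linarith)

end IsHardyField

lemma tpow_mem_sClass {H : Set (ℝ → ℝ)} (hLE : ContainsLE H) {f : ℝ → ℝ} {k : ℕ} (hk : 0 < k)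
    {a θ : ℝ} (hlo : ∀ x < a, tpow x =O[atTop] iteratedDeriv k f)
    (hup : ∀ x, a < x → iteratedDeriv (k + 1) f =O[atTop] tpow (x - 1))
    (hθa : -a / k < θ) (hθb : θ < (1 - a) / (k + 1)) : tpow θ ∈ SClass H f k := by
  have hk' : (0 : ℝ) < k := by exact_mod_cast hk
  rw [div_lt_iff₀ hk'] at hθa
  rw [lt_div_iff₀ (by positivity)] at hθb
  refine ⟨tpow_mem hLE θ, ?_, .inr (.inl ?_), ?_⟩
  · have : tpow θ =o[atTop] fun t => t := (tpow_isLittleO_tpow (by linarith : θ < 1)).congr'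
      EventuallyEq.rfl ((eventually_gt_atTop 0).mono fun t ht => tpow_one ht)
    exact this.tendsto_div_nhds_zero
  · refine tendsto_tpow_mul_abs_rpow_atTop (inv_pos.2 hk')
      (hlo ((a - θ * k) / 2) (by linarith)) ?_
    field_simp
    linarith
  · refine (tendsto_tpow_mul_abs_rpow_zero (θ := θ) (by positivity : (0 : ℝ) ≤ ((k : ℝ) + 1)⁻¹)
      (hup ((a + 1 - θ * (k + 1)) / 2) (by linarith)) ?_).congr fun t => ?_
    · field_simp
      linarith
    · simp only [neg_div, one_div, Real.rpow_neg (abs_nonneg _), div_inv_eq_mul]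

/-- For `f` strongly non-polynomial in a Hardy field containing ℒℰ with
`t^δ ≪ f(t)` for some `δ > 0`, the class `S(f,k)` is non-empty for all sufficiently
large `k`. -/
theorem stmt_5 (H : Set (ℝ → ℝ)) (hH : IsHardyField H) (hLE : ContainsLE H)
    (f : ℝ → ℝ) (hf : f ∈ H) (hsnp : StronglyNonPoly f)
    (δ : ℝ) (hδ : 0 < δ) (hlow : Dom (fun t => t ^ δ) f) :
    ∃ K : ℕ, ∀ k : ℕ, K ≤ k → (SClass H f k).Nonempty := by
  have hδf : tpow δ =O[atTop] f := hlow.isBigO.congr'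
    ((eventually_gt_atTop 0).mono fun t ht => (tpow_eq_rpow ht δ).symm) EventuallyEq.rfl
  obtain ⟨k₀, hk₀lo, hk₀up⟩ := hsnp.exists_tpow_isLittleO hδ hδf
  have hlower := hH.tpow_isBigO_iteratedDeriv hLE hf
    (fun x hx => (tpow_isBigO_tpow hx.le).trans hδf)
    fun k L hL => hH.not_tendsto_iteratedDeriv hf hk₀lo hk₀up k hL
  refine ⟨1, fun k hk => ?_⟩
  obtain ⟨a, hδa, hlo, hup⟩ := hH.exists_growth_exponent hLE (hH.iteratedDeriv_mem hf k)
    (hlower k) (hH.iteratedDeriv_isBigO_tpow hf hk₀up.isBigO k)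
  have hgap : -a / k < (1 - a) / (k + 1) := by
    have hk' : (1 : ℝ) ≤ k := by exact_mod_cast hk
    rw [div_lt_div_iff₀ (by linarith) (by linarith)]
    linarith
  refine ⟨_, tpow_mem_sClass hLE hk hlo (fun x hx => ?_) (left_lt_add_div_two.2 hgap)
    (add_div_two_lt_right.2 hgap)⟩
  rw [iteratedDeriv_succ]
  exact hH.deriv_isBigO_tpow (hH.iteratedDeriv_mem hf k) (hup x hx)
end
end

section
/- Let H be a Hardy field containing ℒℰ and let f ∈ H be strongly non-polynomial with t^δ ≪ f(t) for some δ > 0. Then for every natural number k large enough that f^{(k)}(t) → 0, the class S(f,k) does not contain all functions of the form t ↦ t^c with c close to 1: for every c_0 ∈ (0,1) there exists c ∈ (c_0, 1) such that the function t ↦ t^c does not belong to S(f,k). -/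
open Filter MeasureTheory Topology

noncomputable section

private lemma aux_iteratedDeriv_mem {H : Set (ℝ → ℝ)} (hH : IsHardyField H)
    {f : ℝ → ℝ} (hf : f ∈ H) (k : ℕ) : iteratedDeriv k f ∈ H := by
  induction k with
  | zero => rw [iteratedDeriv_zero]; exact hf
  | succ n ih => rw [iteratedDeriv_succ]; exact hH.deriv_mem ih

/-- For `f` strongly non-polynomial in a Hardy field containing ℒℰ with
`t^δ ≪ f(t)` for some `δ > 0`, and any `k` large enough that `f⁽ᵏ⁾(t) → 0`, the class
`S(f,k)` does not contain all functions `t ↦ t^c` with `c` close to `1`. -/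
theorem stmt_7 (H : Set (ℝ → ℝ)) (hH : IsHardyField H) (hLE : ContainsLE H)
    (f : ℝ → ℝ) (hf : f ∈ H) (hsnp : StronglyNonPoly f)
    (δ : ℝ) (hδ : 0 < δ) (hlow : Dom (fun t => t ^ δ) f)
    (k : ℕ) (hk : Filter.Tendsto (iteratedDeriv k f) Filter.atTop (nhds 0)) :
    ∀ c₀ : ℝ, 0 < c₀ → c₀ < 1 →
      ∃ c : ℝ, c₀ < c ∧ c < 1 ∧ (fun t : ℝ => t ^ c) ∉ SClass H f k := by
  intro c₀ hc₀0 hc₀1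
  -- the case k = 0 is impossible
  rcases Nat.eq_zero_or_pos k with hk0 | hkpos
  · exfalso
    subst hk0
    rw [iteratedDeriv_zero] at hk
    obtain ⟨C, hC, hCev⟩ := hlow
    have h1 : ∀ᶠ t in atTop, |f t| < 1 := by
      have habs : Tendsto (fun t => |f t|) atTop (nhds |(0 : ℝ)|) := hk.abs
      exact habs.eventually (eventually_lt_nhds (by norm_num))
    have h2 : ∀ᶠ t : ℝ in atTop, C + 1 ≤ t ^ δ :=
      (tendsto_rpow_atTop hδ).eventually_ge_atTop (C + 1)
    have h3 : ∀ᶠ t : ℝ in atTop, (0 : ℝ) ≤ t := eventually_ge_atTop 0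
    obtain ⟨t, hd1, hd2, hd3, hd4⟩ := (h1.and (h2.and (h3.and hCev))).exists
    have : |(fun t : ℝ => t ^ δ) t| = t ^ δ := abs_of_nonneg (Real.rpow_nonneg hd3 δ)
    rw [this] at hd4
    nlinarith [abs_nonneg (f t)]
  -- now k ≥ 1
  have hK1 : (1 : ℝ) ≤ (k : ℝ) := by exact_mod_cast hkpos
  set c : ℝ := (1 + c₀) / 2 with hc_def
  set c' : ℝ := 1 - (1 - c₀) / (2 * ((k : ℝ) + 2)) with hc'_def
  have hden : (0 : ℝ) < 2 * ((k : ℝ) + 2) := by positivity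
  have hη : (0 : ℝ) < (1 - c₀) / (2 * ((k : ℝ) + 2)) := by
    apply div_pos (by linarith) hden
  have hc0 : c₀ < c := by rw [hc_def]; linarith
  have hc1 : c < 1 := by rw [hc_def]; linarith
  have hc'1 : c' < 1 := by rw [hc'_def]; linarith
  have hc'0 : c₀ < c' := by
    have : (1 - c₀) / (2 * ((k : ℝ) + 2)) < 1 - c₀ := by
      rw [div_lt_iff₀ hden]; nlinarith
    rw [hc'_def]; linarith
  have hcpos : 0 < c := by linarith
  set a : ℝ := c' * ((k : ℝ) + 1) with ha_def
  have hb : 0 < a - 1 - c * (k : ℝ) := by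
    have hkey : a - 1 - c * (k : ℝ) =
        ((1 - c₀) / (2 * ((k : ℝ) + 2))) * ((k : ℝ) ^ 2 + (k : ℝ) - 1) := by
      rw [ha_def, hc_def, hc'_def]
      field_simp
      ring
    rw [hkey]
    apply mul_pos hη
    nlinarith
  have ha1 : 1 < a := by nlinarith
  by_cases hmemc : (fun t : ℝ => t ^ c) ∈ SClass H f k
  swap
  · exact ⟨c, hc0, hc1, hmemc⟩
  by_cases hmemc' : (fun t : ℝ => t ^ c') ∈ SClass H f k
  swap
  · exact ⟨c', hc'0, hc'1, hmemc'⟩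
  exfalso
  set F : ℝ → ℝ := iteratedDeriv k f with hF_def
  set F' : ℝ → ℝ := iteratedDeriv (k + 1) f with hF'_def
  have hFderiv : F' = deriv F := by rw [hF'_def, hF_def, iteratedDeriv_succ]
  -- F ∈ H
  have hFmem : F ∈ H := aux_iteratedDeriv_mem hH hf k
  obtain ⟨-, -, hA, -⟩ := hmemc
  obtain ⟨-, -, -, hB⟩ := hmemc'
  -- Step A: a uniform lower bound from the nonzero-limit condition
  have hGnonneg : ∀ᶠ t : ℝ in atTop, 0 ≤ t ^ c * |F t| ^ ((k : ℝ)⁻¹) := by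
    filter_upwards [eventually_ge_atTop (0 : ℝ)] with t ht
    exact mul_nonneg (Real.rpow_nonneg ht c) (Real.rpow_nonneg (abs_nonneg _) _)
  have hM : ∃ M : ℝ, 0 < M ∧ ∀ᶠ t : ℝ in atTop, M ≤ t ^ c * |F t| ^ ((k : ℝ)⁻¹) := by
    rcases hA with ⟨L, hL, hlim⟩ | hlim | hlim
    · have hL0 : 0 ≤ L := ge_of_tendsto hlim hGnonneg
      have hLpos : 0 < L := lt_of_le_of_ne hL0 (Ne.symm hL)
      exact ⟨L / 2, by linarith, hlim.eventually (eventually_ge_nhds (by linarith))⟩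
    · exact ⟨1, one_pos, hlim.eventually_ge_atTop 1⟩
    · exfalso
      obtain ⟨t, h1, h2⟩ := ((hlim.eventually_le_atBot (-1)).and hGnonneg).exists
      linarith
  -- Step B: upper bound for |F'| from the Prec condition
  have hUp : ∀ᶠ t : ℝ in atTop, |F' t| ≤ t ^ (-a) := by
    have hq : ∀ᶠ t : ℝ in atTop,
        t ^ c' / |F' t| ^ (-(1 : ℝ) / ((k : ℝ) + 1)) < 1 :=
      hB.eventually (eventually_lt_nhds one_pos)
    filter_upwards [hq, eventually_ge_atTop (1 : ℝ)] with t hqt ht1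
    have ht0 : (0 : ℝ) < t := lt_of_lt_of_le one_pos ht1
    by_cases hF0 : F' t = 0
    · rw [hF0, abs_zero]; exact Real.rpow_nonneg ht0.le _
    · have hk10 : ((k : ℝ) + 1) ≠ 0 := by positivity
      have e1 : |F' t| ^ (-(1 : ℝ) / ((k : ℝ) + 1)) = (|F' t| ^ (((k : ℝ) + 1)⁻¹))⁻¹ := by
        rw [neg_div, one_div, Real.rpow_neg (abs_nonneg _)]
      rw [e1, div_eq_mul_inv, inv_inv] at hqt
      have htc : 0 < t ^ c' := Real.rpow_pos_of_pos ht0 _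
      have h2 : |F' t| ^ (((k : ℝ) + 1)⁻¹) < (t ^ c')⁻¹ := by
        rw [show (t ^ c')⁻¹ = 1 / t ^ c' from (one_div _).symm, lt_div_iff₀ htc]
        nlinarith [hqt]
      have h3 : |F' t| ≤ ((t ^ c')⁻¹) ^ ((k : ℝ) + 1) := by
        have e2 : |F' t| = (|F' t| ^ (((k : ℝ) + 1)⁻¹)) ^ ((k : ℝ) + 1) := by
          rw [← Real.rpow_mul (abs_nonneg _), inv_mul_cancel₀ hk10, Real.rpow_one]
        rw [e2]
        exact Real.rpow_le_rpow (Real.rpow_nonneg (abs_nonneg _) _) h2.le (by positivity)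
      have e3 : ((t ^ c')⁻¹) ^ ((k : ℝ) + 1) = t ^ (-a) := by
        rw [← Real.rpow_neg ht0.le, ← Real.rpow_mul ht0.le]
        congr 1
        rw [ha_def]; ring
      rw [e3] at h3
      exact h3
  -- gather all eventual facts
  obtain ⟨M, hMpos, hMev⟩ := hM
  have hdiff := hH.eventuallyDifferentiable hFmem
  have hall : ∀ᶠ t : ℝ in atTop, DifferentiableAt ℝ F t ∧
      M ≤ t ^ c * |F t| ^ ((k : ℝ)⁻¹) ∧ |F' t| ≤ t ^ (-a) ∧ (1 : ℝ) ≤ t := by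
    filter_upwards [hdiff, hMev, hUp, eventually_ge_atTop (1 : ℝ)] with t h1 h2 h3 h4
    exact ⟨h1, h2, h3, h4⟩
  obtain ⟨x₀, hx₀⟩ := eventually_atTop.mp hall
  -- key inequality for x ≥ x₀
  have key : ∀ x, x₀ ≤ x → M ^ (k : ℝ) * (a - 1) ≤ x ^ (-(a - 1 - c * (k : ℝ))) := by
    intro x hx
    have hx1 : (1 : ℝ) ≤ x := (hx₀ x hx).2.2.2
    have hxpos : (0 : ℝ) < x := lt_of_lt_of_le one_pos hx1
    have hderiv : ∀ t ∈ Set.Ici x, HasDerivAt F (F' t) t := by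
      intro t ht
      have hdt : DifferentiableAt ℝ F t := (hx₀ t (le_trans hx ht)).1
      have h := hdt.hasDerivAt
      rwa [← hFderiv] at h
    have hbnd_int : IntegrableOn (fun s : ℝ => s ^ (-a)) (Set.Ioi x) :=
      integrableOn_Ioi_rpow_of_lt (by linarith) hxpos
    have haemeas : AEStronglyMeasurable F' (volume.restrict (Set.Ioi x)) := by
      rw [hFderiv]
      exact (measurable_deriv F).aestronglyMeasurable.restrict
    have haebound : ∀ᵐ s ∂(volume.restrict (Set.Ioi x)), ‖F' s‖ ≤ s ^ (-a) := by
      rw [ae_restrict_iff' measurableSet_Ioi]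
      refine ae_of_all _ fun s hs => ?_
      have hxs : x ≤ s := le_of_lt hs
      simpa [Real.norm_eq_abs] using (hx₀ s (le_trans hx hxs)).2.2.1
    have hint : IntegrableOn F' (Set.Ioi x) :=
      Integrable.mono' hbnd_int haemeas haebound
    have heq : ∫ s in Set.Ioi x, F' s = 0 - F x :=
      integral_Ioi_of_hasDerivAt_of_tendsto' hderiv hint hk
    have hFle : |F x| ≤ ∫ s in Set.Ioi x, s ^ (-a) := by
      have h := norm_integral_le_of_norm_le hbnd_int haebound
      rw [heq] at h
      simpa [Real.norm_eq_abs] using h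
    have hIval : ∫ s in Set.Ioi x, s ^ (-a) = x ^ (-(a - 1)) / (a - 1) := by
      rw [integral_Ioi_rpow_of_lt (by linarith) hxpos,
        show -a + 1 = -(a - 1) from by ring, neg_div_neg_eq]
    have hlow2 : M ^ (k : ℝ) / x ^ (c * (k : ℝ)) ≤ |F x| := by
      have h2 : M ≤ x ^ c * |F x| ^ ((k : ℝ)⁻¹) := (hx₀ x hx).2.1
      have hxc : 0 < x ^ c := Real.rpow_pos_of_pos hxpos _
      have h3 : M / x ^ c ≤ |F x| ^ ((k : ℝ)⁻¹) := by
        rw [div_le_iff₀ hxc]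
        nlinarith [h2]
      have hknz : ((k : ℝ)) ≠ 0 := by positivity
      have h4 : (M / x ^ c) ^ ((k : ℝ)) ≤ (|F x| ^ ((k : ℝ)⁻¹)) ^ ((k : ℝ)) :=
        Real.rpow_le_rpow (by positivity) h3 (by positivity)
      rw [← Real.rpow_mul (abs_nonneg _), inv_mul_cancel₀ hknz, Real.rpow_one] at h4
      calc M ^ (k : ℝ) / x ^ (c * (k : ℝ)) = (M / x ^ c) ^ (k : ℝ) := by
            rw [Real.div_rpow hMpos.le (Real.rpow_nonneg hxpos.le c),
              Real.rpow_mul hxpos.le]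
        _ ≤ |F x| := h4
    have hchain : M ^ (k : ℝ) / x ^ (c * (k : ℝ)) ≤ x ^ (-(a - 1)) / (a - 1) :=
      hlow2.trans (hFle.trans_eq hIval)
    have hxck : 0 < x ^ (c * (k : ℝ)) := Real.rpow_pos_of_pos hxpos _
    rw [div_le_div_iff₀ hxck (by linarith : (0 : ℝ) < a - 1)] at hchain
    calc M ^ (k : ℝ) * (a - 1) ≤ x ^ (-(a - 1)) * x ^ (c * (k : ℝ)) := hchain
      _ = x ^ (-(a - 1 - c * (k : ℝ))) := by
          rw [← Real.rpow_add hxpos]; congr 1; ring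
  -- contradiction with x^{-b} → 0
  have hlim0 : Tendsto (fun x : ℝ => x ^ (-(a - 1 - c * (k : ℝ)))) atTop (nhds 0) :=
    tendsto_rpow_neg_atTop hb
  have hMK : 0 < M ^ (k : ℝ) * (a - 1) :=
    mul_pos (Real.rpow_pos_of_pos hMpos _) (by linarith)
  have hev : ∀ᶠ x : ℝ in atTop,
      x ^ (-(a - 1 - c * (k : ℝ))) < M ^ (k : ℝ) * (a - 1) :=
    hlim0.eventually (eventually_lt_nhds hMK)
  obtain ⟨x, hx1, hx2⟩ := ((eventually_ge_atTop x₀).and hev).exists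
  exact absurd (key x hx1) (not_le.mpr hx2)

end
end

section
/- Let H be a Hardy field containing ℒℰ and let f, g ∈ H be strongly non-polynomial functions with t^δ ≪ f(t) and t^{δ'} ≪ g(t) for some δ, δ' > 0, and with g(t) ≪ f(t). Then there exist infinitely many pairs of natural numbers (k, ℓ) such that S(f,k) ∩ S(g,ℓ) ≠ ∅. -/
open Filter MeasureTheory Topology

noncomputable section

/-!
For `u` in a Hardy field, `t u'(t) / u(t)` tends to a limit in `[-∞, ∞]`; if `u` is bounded above
and below by powers of `t`, the limit is a real number `a` and `|u t| = t ^ (a + o(1))`.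
If `a ≠ 0` then `u' = (t u' / u) · u / t` has order `a - 1`. If `a = 0` and `u` has no nonzero
finite limit, `u'` has order `-1`: otherwise `|u'| ≤ t ^ (b - 1)` with `b < 0`, so `u`
converges at rate `t ^ b`.

For `f` as in the theorem, of order `α > 0`, the only obstruction to `f⁽ʲ⁾` having order `α - j`
would be `f⁽ʲ⁾ → c ≠ 0` with `α = j`, which forces `f ∼ c tʲ / j!` and contradicts strong
non-polynomiality. Hence `t ^ (1 - y) ∈ S(f, k)` whenever `α / (k + 1) < y < α / k`, and for
every large `k` the interval `(α / (k + 1), α / k)` meets some `(β / (ℓ + 1), β / ℓ)`.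
-/

open Set Real
open scoped Nat

section

variable {H : Set (ℝ → ℝ)}

theorem exists_monotoneOn_Ici {u u' : ℝ → ℝ} (hu : ∀ᶠ t in atTop, HasDerivAt u (u' t) t)
    (hu' : ∀ᶠ t in atTop, 0 ≤ u' t) : ∃ T, MonotoneOn u (Ici T) := by
  obtain ⟨T, hT⟩ := eventually_atTop.1 (hu.and hu')
  refine ⟨T, monotoneOn_of_hasDerivWithinAt_nonneg (f' := u') (convex_Ici T)
    (fun t ht => (hT t ht).1.continuousAt.continuousWithinAt) (fun t ht => ?_) fun t ht => ?_⟩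
  · rw [interior_Ici] at ht
    exact (hT t ht.le).1.hasDerivWithinAt
  · rw [interior_Ici] at ht
    exact (hT t ht.le).2

theorem exists_antitoneOn_Ici {u u' : ℝ → ℝ} (hu : ∀ᶠ t in atTop, HasDerivAt u (u' t) t)
    (hu' : ∀ᶠ t in atTop, u' t ≤ 0) : ∃ T, AntitoneOn u (Ici T) := by
  obtain ⟨T, hT⟩ := exists_monotoneOn_Ici (hu.mono fun t h => h.neg)
    (hu'.mono fun t h => neg_nonneg.2 h)
  exact ⟨T, fun s hs t ht hst => neg_le_neg_iff.1 (hT hs ht hst)⟩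

theorem tendsto_atTop_or_nhds_of_monotoneOn {u : ℝ → ℝ} {T : ℝ} (hu : MonotoneOn u (Ici T)) :
    Tendsto u atTop atTop ∨ ∃ c, Tendsto u atTop (𝓝 c) := by
  have hmono : Monotone fun t => u (max T t) := fun s t hst =>
    hu (le_max_left T s) (le_max_left T t) (max_le_max le_rfl hst)
  have heq : (fun t => u (max T t)) =ᶠ[atTop] u :=
    (eventually_ge_atTop T).mono fun t ht => by simp only [max_eq_right ht]
  exact (tendsto_atTop_of_monotone hmono).imp (·.congr' heq) fun ⟨c, hc⟩ => ⟨c, hc.congr' heq⟩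

theorem ContainsLE.rpow_mem (hH : IsHardyField H) (hLE : ContainsLE H) (b : ℝ) :
    (fun t : ℝ => t ^ b) ∈ H := by
  refine hH.mem_congr (hLE _ (.exp (.mul (.const b) (.log .id)))) ?_
  filter_upwards [eventually_gt_atTop 0] with t ht
  simp [rpow_def_of_pos ht, mul_comm]

namespace IsHardyField

theorem sub_mem (hH : IsHardyField H) {f g : ℝ → ℝ} (hf : f ∈ H) (hg : g ∈ H) :
    (fun t => f t - g t) ∈ H := by
  convert hH.add_mem hf (hH.neg_mem hg) using 1
  ext t
  simp [sub_eq_add_neg]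

theorem iteratedDeriv_mem_s9 (hH : IsHardyField H) {f : ℝ → ℝ} (hf : f ∈ H) (j : ℕ) :
    iteratedDeriv j f ∈ H := by
  induction j with
  | zero => rwa [iteratedDeriv_zero]
  | succ j ih => rw [iteratedDeriv_succ]; exact hH.deriv_mem ih

theorem eventually_eq_zero_or_pos_or_neg (hH : IsHardyField H) {h : ℝ → ℝ} (hh : h ∈ H) :
    h =ᶠ[atTop] (fun _ => 0) ∨ (∀ᶠ t in atTop, 0 < h t) ∨ ∀ᶠ t in atTop, h t < 0 := by
  by_cases hz : h =ᶠ[atTop] fun _ => 0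
  · exact .inl hz
  right
  -- `h * h⁻¹` lies in `H`, so it is eventually continuous; as it only takes the values `0`
  -- and `1`, it is eventually constant, and it cannot be eventually `0`.
  set p : ℝ → ℝ := h * fun t => (h t)⁻¹
  obtain ⟨T, hT⟩ := eventually_atTop.1 <| (hH.eventuallyDifferentiable
    (hH.mul_mem hh (hH.inv_mem hh hz))).and (hH.eventuallyDifferentiable hh)
  have hp : MapsTo p (Ici T) {0, 1} := fun t _ => by
    by_cases h0 : h t = 0 <;> simp [p, h0]
  have hne : ∀ t ∈ Ici T, h t ≠ 0 := by
    intro t ht h0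
    refine hz (eventually_atTop.2 ⟨T, fun s hs => by_contra fun hs0 => ?_⟩)
    have := isPreconnected_Ici.constant_of_mapsTo (toFinite _).isDiscrete
      (fun x hx => (hT x hx).1.continuousAt.continuousWithinAt) hp hs ht
    simp [h0, hs0] at this
  have hcont : ContinuousOn h (Ici T) := fun x hx => (hT x hx).2.continuousAt.continuousWithinAt
  have hsign : ∀ t ∈ Ici T, 0 < h T * h t := by
    intro t ht
    by_contra hle
    obtain ⟨s, hs, hs0⟩ : (0 : ℝ) ∈ h '' Ici T := by
      rcases lt_or_gt_of_ne (hne T self_mem_Ici) with hT0 | hT0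
      · exact isPreconnected_Ici.intermediate_value self_mem_Ici ht hcont
          ⟨hT0.le, by nlinarith⟩
      · exact isPreconnected_Ici.intermediate_value ht self_mem_Ici hcont
          ⟨by nlinarith, hT0.le⟩
    exact hne s hs hs0
  rcases lt_or_gt_of_ne (hne T self_mem_Ici) with hT0 | hT0
  · exact .inr (eventually_atTop.2 ⟨T, fun t ht => by nlinarith [hsign t ht]⟩)
  · exact .inl (eventually_atTop.2 ⟨T, fun t ht => by nlinarith [hsign t ht]⟩)

theorem eventually_le_or_le (hH : IsHardyField H) {f g : ℝ → ℝ} (hf : f ∈ H) (hg : g ∈ H) :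
    (∀ᶠ t in atTop, f t ≤ g t) ∨ ∀ᶠ t in atTop, g t ≤ f t := by
  rcases hH.eventually_eq_zero_or_pos_or_neg (hH.sub_mem hf hg) with h | h | h
  · exact .inl (h.mono fun t ht => by simp at ht; linarith)
  · exact .inr (h.mono fun t ht => by linarith)
  · exact .inl (h.mono fun t ht => by linarith)

theorem tendsto_atTop_or_atBot_or_nhds (hH : IsHardyField H) {h : ℝ → ℝ} (hh : h ∈ H) :
    Tendsto h atTop atTop ∨ Tendsto h atTop atBot ∨ ∃ c, Tendsto h atTop (𝓝 c) := by
  have hd : ∀ᶠ t in atTop, HasDerivAt h (deriv h t) t :=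
    (hH.eventuallyDifferentiable hh).mono fun t ht => ht.hasDerivAt
  rcases hH.eventually_le_or_le hH.zero_mem (hH.deriv_mem hh) with hpos | hneg
  · obtain ⟨T, hT⟩ := exists_monotoneOn_Ici hd hpos
    exact (tendsto_atTop_or_nhds_of_monotoneOn hT).imp_right .inr
  · obtain ⟨T, hT⟩ := exists_antitoneOn_Ici hd hneg
    rcases tendsto_atTop_or_nhds_of_monotoneOn hT.neg with h | ⟨c, hc⟩
    · exact .inr (.inl (tendsto_neg_atTop_iff.1 h))
    · exact .inr (.inr ⟨-c, by simpa using hc.neg⟩)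

end IsHardyField

theorem le_of_eventually_mul_log_le_add {a b C : ℝ}
    (h : ∀ᶠ t in atTop, a * log t ≤ b * log t + C) : a ≤ b := by
  by_contra! hab
  obtain ⟨t, h1, h2⟩ :=
    (h.and ((tendsto_log_atTop.const_mul_atTop (sub_pos.2 hab)).eventually_gt_atTop C)).exists
  linarith [show (a - b) * log t = a * log t - b * log t by ring]

theorem exists_add_mul_log_le {w w' : ℝ → ℝ} {γ : ℝ}
    (hw : ∀ᶠ t in atTop, HasDerivAt w (w' t) t) (h : ∀ᶠ t in atTop, γ ≤ t * w' t) :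
    ∃ C, ∀ᶠ t in atTop, C + γ * log t ≤ w t := by
  obtain ⟨T, hT⟩ := exists_monotoneOn_Ici (u := fun t => w t - γ * log t)
    (u' := fun t => w' t - γ * t⁻¹)
    (by filter_upwards [hw, eventually_gt_atTop 0] with t h ht
        exact h.sub ((hasDerivAt_log ht.ne').const_mul γ))
    (by filter_upwards [h, eventually_gt_atTop 0] with t h ht
        rw [sub_nonneg, ← div_eq_mul_inv, div_le_iff₀ ht]
        linarith [mul_comm t (w' t)])
  refine ⟨w T - γ * log T, (eventually_ge_atTop T).mono fun t ht => ?_⟩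
  linarith [hT self_mem_Ici ht ht]

theorem exists_le_add_mul_log {w w' : ℝ → ℝ} {γ : ℝ}
    (hw : ∀ᶠ t in atTop, HasDerivAt w (w' t) t) (h : ∀ᶠ t in atTop, t * w' t ≤ γ) :
    ∃ C, ∀ᶠ t in atTop, w t ≤ C + γ * log t := by
  obtain ⟨C, hC⟩ := exists_add_mul_log_le (w := -w) (w' := -w') (γ := -γ)
    (hw.mono fun t h => h.neg) (h.mono fun t h => by simp only [Pi.neg_apply]; linarith)
  exact ⟨-C, hC.mono fun t h => by simp only [Pi.neg_apply] at h; linarith⟩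

theorem eventually_hasDerivAt_log {u : ℝ → ℝ} (hne : ∀ᶠ t in atTop, u t ≠ 0)
    (hd : ∀ᶠ t in atTop, DifferentiableAt ℝ u t) :
    ∀ᶠ t in atTop, HasDerivAt (fun t => log (u t)) (logDeriv u t) t := by
  filter_upwards [hne, hd] with t hne hd
  exact hd.hasDerivAt.log hne

/-- `|u t| = t ^ (a + o(1))` as `t → ∞`. Recall that `Real.log x = log |x|`. -/
def HasPowerOrder (u : ℝ → ℝ) (a : ℝ) : Prop :=
  (∀ᶠ t in atTop, u t ≠ 0) ∧ Tendsto (fun t => log (u t) / log t) atTop (𝓝 a)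

namespace HasPowerOrder

variable {u : ℝ → ℝ} {a b : ℝ}

theorem eventually_log_le (h : HasPowerOrder u a) (hb : a < b) :
    ∀ᶠ t in atTop, log (u t) ≤ b * log t := by
  filter_upwards [h.2.eventually (gt_mem_nhds hb), eventually_gt_atTop 1] with t h ht
  exact ((div_lt_iff₀ (log_pos ht)).1 h).le

theorem eventually_mul_log_le (h : HasPowerOrder u a) (hb : b < a) :
    ∀ᶠ t in atTop, b * log t ≤ log (u t) := by
  filter_upwards [h.2.eventually (lt_mem_nhds hb), eventually_gt_atTop 1] with t h ht
  exact ((lt_div_iff₀ (log_pos ht)).1 h).le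

end HasPowerOrder

theorem hasPowerOrder_of_tendsto_mul_logDeriv {u : ℝ → ℝ} {a : ℝ}
    (hne : ∀ᶠ t in atTop, u t ≠ 0) (hd : ∀ᶠ t in atTop, DifferentiableAt ℝ u t)
    (h : Tendsto (fun t => t * logDeriv u t) atTop (𝓝 a)) : HasPowerOrder u a := by
  have hw := eventually_hasDerivAt_log hne hd
  refine ⟨hne, tendsto_order.2 ⟨fun b hb => ?_, fun b hb => ?_⟩⟩
  · obtain ⟨γ, hbγ, hγa⟩ := exists_between hb
    obtain ⟨C, hC⟩ := exists_add_mul_log_le hw ((h.eventually (lt_mem_nhds hγa)).mono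
      fun _ => le_of_lt)
    filter_upwards [hC, (tendsto_log_atTop.const_mul_atTop (sub_pos.2 hbγ)).eventually_gt_atTop
      (-C), eventually_gt_atTop 1] with t h1 h2 ht
    rw [lt_div_iff₀ (log_pos ht)]
    linarith [show (γ - b) * log t = γ * log t - b * log t by ring]
  · obtain ⟨γ, haγ, hγb⟩ := exists_between hb
    obtain ⟨C, hC⟩ := exists_le_add_mul_log hw ((h.eventually (gt_mem_nhds haγ)).mono
      fun _ => le_of_lt)
    filter_upwards [hC, (tendsto_log_atTop.const_mul_atTop (sub_pos.2 hγb)).eventually_gt_atTop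
      C, eventually_gt_atTop 1] with t h1 h2 ht
    rw [div_lt_iff₀ (log_pos ht)]
    linarith [show (b - γ) * log t = b * log t - γ * log t by ring]

namespace IsHardyField

theorem mul_logDeriv_mem (hH : IsHardyField H) (hLE : ContainsLE H) {u : ℝ → ℝ} (hu : u ∈ H)
    (hne : ∀ᶠ t in atTop, u t ≠ 0) : (fun t => t * logDeriv u t) ∈ H := by
  have hnz : ¬ u =ᶠ[atTop] fun _ => 0 := fun h0 =>
    let ⟨_, h1, h2⟩ := (h0.and hne).exists; h2 h1
  convert hH.mul_mem (hLE _ IsLE.id) (hH.mul_mem (hH.deriv_mem hu) (hH.inv_mem hu hnz)) using 1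
  ext t
  simp [logDeriv_apply, div_eq_mul_inv]

theorem exists_tendsto_mul_logDeriv (hH : IsHardyField H) (hLE : ContainsLE H) {u : ℝ → ℝ}
    (hu : u ∈ H) (hne : ∀ᶠ t in atTop, u t ≠ 0) {A B C C' : ℝ}
    (hlow : ∀ᶠ t in atTop, A * log t ≤ log (u t) + C)
    (hup : ∀ᶠ t in atTop, log (u t) ≤ B * log t + C') :
    ∃ a, Tendsto (fun t => t * logDeriv u t) atTop (𝓝 a) := by
  have hw := eventually_hasDerivAt_log hne (hH.eventuallyDifferentiable hu)
  rcases hH.tendsto_atTop_or_atBot_or_nhds (hH.mul_logDeriv_mem hLE hu hne) with htop | hbot | hc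
  · obtain ⟨D, hD⟩ := exists_add_mul_log_le hw (htop.eventually_ge_atTop (B + 1))
    have := le_of_eventually_mul_log_le_add (a := B + 1) (b := B) (C := C' - D) <| by
      filter_upwards [hD, hup] with t h1 h2
      linarith
    linarith
  · obtain ⟨D, hD⟩ := exists_le_add_mul_log hw (hbot.eventually_le_atBot (A - 1))
    have := le_of_eventually_mul_log_le_add (a := A) (b := A - 1) (C := D + C) <| by
      filter_upwards [hD, hlow] with t h1 h2
      linarith
    linarith
  · exact hc

theorem exists_hasPowerOrder (hH : IsHardyField H) (hLE : ContainsLE H) {u : ℝ → ℝ}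
    (hu : u ∈ H) (hne : ∀ᶠ t in atTop, u t ≠ 0) {A B C C' : ℝ}
    (hlow : ∀ᶠ t in atTop, A * log t ≤ log (u t) + C)
    (hup : ∀ᶠ t in atTop, log (u t) ≤ B * log t + C') :
    ∃ a, A ≤ a ∧ HasPowerOrder u a := by
  obtain ⟨a, ha⟩ := hH.exists_tendsto_mul_logDeriv hLE hu hne hlow hup
  have hord := hasPowerOrder_of_tendsto_mul_logDeriv hne (hH.eventuallyDifferentiable hu) ha
  refine ⟨a, le_of_not_gt fun haA => ?_, hord⟩
  have := le_of_eventually_mul_log_le_add (a := A) (b := (a + A) / 2) (C := C) <| by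
    filter_upwards [hlow, hord.eventually_log_le (b := (a + A) / 2) (by linarith)] with t h1 h2
    linarith
  linarith

end IsHardyField

namespace HasPowerOrder

variable {u : ℝ → ℝ} {a : ℝ}

theorem tendsto_mul_logDeriv (hH : IsHardyField H) (hLE : ContainsLE H) (hu : u ∈ H)
    (h : HasPowerOrder u a) : Tendsto (fun t => t * logDeriv u t) atTop (𝓝 a) := by
  obtain ⟨c, hc⟩ := hH.exists_tendsto_mul_logDeriv hLE hu h.1
    (A := a - 1) (B := a + 1) (C := 0) (C' := 0)
    ((h.eventually_mul_log_le (sub_one_lt a)).mono fun _ h => by linarith)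
    ((h.eventually_log_le (lt_add_one a)).mono fun _ h => by linarith)
  have hord := hasPowerOrder_of_tendsto_mul_logDeriv h.1 (hH.eventuallyDifferentiable hu) hc
  rwa [tendsto_nhds_unique hord.2 h.2] at hc

end HasPowerOrder

theorem log_deriv_eq {u : ℝ → ℝ} {t : ℝ} (hu : u t ≠ 0) (hu' : deriv u t ≠ 0) (ht : t ≠ 0) :
    log (deriv u t) = log (t * logDeriv u t) + log (u t) - log t := by
  rw [logDeriv_apply, log_mul ht (div_ne_zero hu' hu), log_div hu' hu]
  ring

theorem exists_abs_sub_le_of_abs_deriv_le_rpow {u : ℝ → ℝ} {b : ℝ} (hb : b < 0)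
    (hd : ∀ᶠ t in atTop, DifferentiableAt ℝ u t)
    (h : ∀ᶠ t in atTop, |deriv u t| ≤ t ^ (b - 1)) :
    ∃ c, ∀ᶠ t in atTop, |u t - c| ≤ t ^ b / -b := by
  -- `u ± t ^ b / b` is monotone (resp. antitone), and these two functions squeeze `u`.
  have hpow : ∀ᶠ t in atTop, HasDerivAt (fun t => t ^ b / b) (t ^ (b - 1)) t := by
    filter_upwards [eventually_gt_atTop 0] with t ht
    have := (hasDerivAt_rpow_const (p := b) (.inl ht.ne')).div_const b
    rwa [mul_div_cancel_left₀ _ hb.ne] at this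
  obtain ⟨T₁, hφ⟩ := exists_monotoneOn_Ici (u := fun t => u t + t ^ b / b)
    (by filter_upwards [hd, hpow] with t h1 h2 using h1.hasDerivAt.add h2)
    (by filter_upwards [h] with t h using by linarith [neg_abs_le (deriv u t)])
  obtain ⟨T₂, hψ⟩ := exists_antitoneOn_Ici (u := fun t => u t - t ^ b / b)
    (by filter_upwards [hd, hpow] with t h1 h2 using h1.hasDerivAt.sub h2)
    (by filter_upwards [h] with t h using by linarith [le_abs_self (deriv u t)])
  set T := max (max T₁ T₂) 1
  have hT₁ : T₁ ≤ T := (le_max_left _ _).trans (le_max_left _ _)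
  have hT₂ : T₂ ≤ T := (le_max_right _ _).trans (le_max_left _ _)
  have hsq : ∀ s ≥ T, ∀ t ≥ T, u s + s ^ b / b ≤ u t - t ^ b / b := by
    intro s hs t ht
    have hm : T ≤ max s t := hs.trans (le_max_left _ _)
    have hpos : 0 ≤ (max s t) ^ b / -b :=
      div_nonneg (rpow_nonneg (by linarith [le_max_right (max T₁ T₂) 1]) _) (by linarith)
    calc u s + s ^ b / b ≤ u (max s t) + (max s t) ^ b / b :=
          hφ (hT₁.trans hs) (hT₁.trans hm) (le_max_left _ _)
      _ ≤ u (max s t) - (max s t) ^ b / b := by rw [div_neg] at hpos; linarith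
      _ ≤ u t - t ^ b / b := hψ (hT₂.trans ht) (hT₂.trans hm) (le_max_right _ _)
  have hbdd : BddAbove ((fun s => u s + s ^ b / b) '' Ici T) :=
    ⟨u T - T ^ b / b, forall_mem_image.2 fun s hs => hsq s hs T le_rfl⟩
  refine ⟨sSup ((fun s => u s + s ^ b / b) '' Ici T), ?_⟩
  filter_upwards [eventually_ge_atTop T] with t ht
  have h1 := le_csSup hbdd (mem_image_of_mem _ (mem_Ici.2 ht))
  have h2 := csSup_le ((nonempty_Ici).image _) (forall_mem_image.2 fun s hs => hsq s hs t ht)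
  rw [abs_le, div_neg]
  constructor <;> linarith

theorem not_tendsto_pow_nhds_zero (m : ℕ) : ¬ Tendsto (fun t : ℝ => t ^ m) atTop (𝓝 0) :=
  fun h => let ⟨_, h1, h2⟩ := ((h.eventually (gt_mem_nhds one_pos)).and
    (eventually_ge_atTop 1)).exists
  (one_le_pow₀ h2).not_gt h1

theorem not_tendsto_div_pow_of_prec {f : ℝ → ℝ} {k : ℕ} (h1 : Prec (fun t => t ^ k) f)
    (h2 : Prec f fun t => t ^ (k + 1)) {c : ℝ} (hc : c ≠ 0) (j : ℕ) :
    ¬ Tendsto (fun t => f t / t ^ j) atTop (𝓝 c) := by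
  intro h
  have hf : ∀ᶠ t in atTop, f t ≠ 0 ∧ t ≠ 0 := by
    filter_upwards [h.eventually_ne hc, eventually_ne_atTop 0] with t ht ht0
    exact ⟨fun h0 => ht (by simp [h0]), ht0⟩
  rcases le_or_gt j k with hjk | hjk
  · refine not_tendsto_pow_nhds_zero (k - j) ?_
    convert (h1.mul h).congr' _ using 2
    · simp
    filter_upwards [hf] with t ⟨hf, ht⟩
    rw [pow_sub₀ _ ht hjk]
    field_simp
  · refine not_tendsto_pow_nhds_zero (j - (k + 1)) ?_
    convert (h2.div h hc).congr' _ using 2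
    · simp
    filter_upwards [hf] with t ⟨hf, ht⟩
    simp only [Pi.div_apply]
    rw [pow_sub₀ _ ht hjk]
    field_simp

namespace HasPowerOrder

variable {u : ℝ → ℝ} {a : ℝ}

theorem deriv_of_ne_zero (hH : IsHardyField H) (hLE : ContainsLE H) (hu : u ∈ H)
    (h : HasPowerOrder u a) (ha : a ≠ 0) : HasPowerOrder (deriv u) (a - 1) := by
  have hρ := h.tendsto_mul_logDeriv hH hLE hu
  have hne : ∀ᶠ t in atTop, u t ≠ 0 ∧ deriv u t ≠ 0 ∧ t ≠ 0 := by
    filter_upwards [h.1, hρ.eventually_ne ha, eventually_ne_atTop 0] with t hu hρ ht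
    exact ⟨hu, fun h0 => hρ (by simp [logDeriv_apply, h0]), ht⟩
  refine ⟨hne.mono fun t h => h.2.1, ?_⟩
  have hlim := ((hρ.log ha).div_atTop tendsto_log_atTop).add (h.2.sub_const 1)
  rw [zero_add] at hlim
  refine hlim.congr' ?_
  filter_upwards [hne, eventually_gt_atTop 1] with t ⟨hu, hu', ht⟩ ht1
  rw [log_deriv_eq hu hu' ht]
  field_simp [(log_pos ht1).ne']
  ring

theorem eventually_rpow_le_abs_deriv_of_eq_zero (hH : IsHardyField H) (hLE : ContainsLE H)
    (hu : u ∈ H) (h : HasPowerOrder u 0) (hlim : ∀ c ≠ 0, ¬ Tendsto u atTop (𝓝 c)) {b : ℝ}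
    (hb : b < 0) :
    ∀ᶠ t in atTop, t ^ (b - 1) ≤ |deriv u t| := by
  have hpow := hLE.rpow_mem hH (b - 1)
  have hu' := hH.deriv_mem hu
  rcases hH.eventually_le_or_le (hH.mul_mem hpow hpow) (hH.mul_mem hu' hu') with hle | hge
  · filter_upwards [hle, eventually_gt_atTop 0] with t h ht
    simpa [abs_of_pos (rpow_pos_of_pos ht _)] using abs_le_iff_mul_self_le.2 h
  exfalso
  obtain ⟨c, hc⟩ := exists_abs_sub_le_of_abs_deriv_le_rpow hb
      (hH.eventuallyDifferentiable hu) <| by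
    filter_upwards [hge, eventually_gt_atTop 0] with t h ht
    simpa [abs_of_pos (rpow_pos_of_pos ht _)] using abs_le_iff_mul_self_le.2 h
  rcases ne_or_eq c 0 with hc0 | rfl
  · refine hlim c hc0 (tendsto_sub_nhds_zero_iff.1 ((tendsto_zero_iff_abs_tendsto_zero _).2
      (squeeze_zero' (.of_forall fun t => abs_nonneg _) hc ?_)))
    simpa using (tendsto_rpow_neg_atTop (y := -b) (by linarith)).div_const (-b)
  · have := le_of_eventually_mul_log_le_add (a := b / 2) (b := b) (C := - log (-b)) <| by
      filter_upwards [hc, h.eventually_mul_log_le (b := b / 2) (by linarith), h.1,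
        eventually_gt_atTop 0] with t h1 h2 h3 ht
      rw [sub_zero] at h1
      have := log_le_log (abs_pos.2 h3) h1
      rw [log_abs, log_div (rpow_pos_of_pos ht _).ne' (by linarith), log_rpow ht] at this
      linarith
    linarith

theorem deriv_of_eq_zero (hH : IsHardyField H) (hLE : ContainsLE H) (hu : u ∈ H)
    (h : HasPowerOrder u 0) (hlim : ∀ c ≠ 0, ¬ Tendsto u atTop (𝓝 c)) :
    HasPowerOrder (deriv u) (-1) := by
  have hlow : ∀ b : ℝ, b < 0 → ∀ᶠ t in atTop, t ^ (b - 1) ≤ |deriv u t| := fun b hb =>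
    h.eventually_rpow_le_abs_deriv_of_eq_zero hH hLE hu hlim (b := b) hb
  have hne : ∀ᶠ t in atTop, u t ≠ 0 ∧ deriv u t ≠ 0 ∧ 0 < t := by
    filter_upwards [h.1, hlow (-1) (by norm_num), eventually_gt_atTop 0] with t hu h' ht
    exact ⟨hu, abs_pos.1 ((rpow_pos_of_pos ht _).trans_le h'), ht⟩
  refine ⟨hne.mono fun t h => h.2.1, tendsto_order.2 ⟨fun b hb => ?_, fun b hb => ?_⟩⟩
  · filter_upwards [hlow ((b + 1) / 2) (by linarith), hne, eventually_gt_atTop 1]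
      with t h' ⟨_, hu', ht⟩ ht1
    rw [lt_div_iff₀ (log_pos ht1), ← log_abs (deriv u t)]
    have := log_le_log (rpow_pos_of_pos ht _) h'
    rw [log_rpow ht] at this
    nlinarith [log_pos ht1]
  · -- `t * u' / u → 0`, so eventually `|u'| ≤ |u| / t`.
    have hρ := (h.tendsto_mul_logDeriv hH hLE hu).abs
    rw [abs_zero] at hρ
    filter_upwards [hρ.eventually (gt_mem_nhds one_pos), hne, eventually_gt_atTop 1,
      h.2.eventually (gt_mem_nhds (show (0 : ℝ) < b + 1 by linarith))] with t hρ ⟨hu, hu', ht⟩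
      ht1 hlog
    rw [div_lt_iff₀ (log_pos ht1)] at hlog ⊢
    rw [log_deriv_eq hu hu' ht.ne', ← log_abs (t * _)]
    have := log_nonpos (abs_nonneg _) hρ.le
    linarith

theorem tendsto_div_pow_succ (hH : IsHardyField H) (hLE : ContainsLE H) (hu : u ∈ H) {n : ℕ}
    (h : HasPowerOrder u (n + 1)) {c : ℝ}
    (hlim : Tendsto (fun t => deriv u t / t ^ n) atTop (𝓝 c)) :
    Tendsto (fun t => u t / t ^ (n + 1)) atTop (𝓝 (c / (n + 1))) := by
  have hρ := h.tendsto_mul_logDeriv hH hLE hu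
  -- `u / t ^ (n + 1) = (u' / t ^ n) / (t * u' / u)`
  refine (hlim.div hρ (by positivity)).congr' ?_
  filter_upwards [h.1, hρ.eventually_ne (by positivity), eventually_ne_atTop 0]
    with t hu hρ ht
  have hu' : deriv u t ≠ 0 := fun h0 => hρ (by simp [logDeriv_apply, h0])
  simp only [Pi.div_apply, logDeriv_apply]
  field_simp
  ring

end HasPowerOrder

theorem IsHardyField.tendsto_div_pow_of_tendsto_iteratedDeriv (hH : IsHardyField H)
    (hLE : ContainsLE H) {c : ℝ} {j : ℕ} {f : ℝ → ℝ} (hf : f ∈ H)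
    (hord : ∀ i ≤ j, HasPowerOrder (iteratedDeriv i f) ((j : ℝ) - i))
    (hlim : Tendsto (iteratedDeriv j f) atTop (𝓝 c)) :
    Tendsto (fun t => f t / t ^ j) atTop (𝓝 (c / j !)) := by
  induction j generalizing f with
  | zero => simpa using hlim
  | succ j ih =>
    have hderiv := ih (hH.deriv_mem hf) (fun i hi => by
      simpa [← iteratedDeriv_succ'] using hord (i + 1) (by omega))
      (by rwa [← iteratedDeriv_succ'])
    have hord₀ : HasPowerOrder f ((j : ℝ) + 1) := by simpa using hord 0 (Nat.zero_le _)
    have := hord₀.tendsto_div_pow_succ hH hLE hf (by simpa using hderiv)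
    convert this using 2
    push_cast [Nat.factorial_succ]
    field_simp

theorem IsHardyField.hasPowerOrder_iteratedDeriv (hH : IsHardyField H) (hLE : ContainsLE H)
    {f : ℝ → ℝ} (hf : f ∈ H) {k : ℕ} (h₁ : Prec (fun t => t ^ k) f)
    (h₂ : Prec f fun t => t ^ (k + 1)) {α : ℝ} (hα : HasPowerOrder f α) (j : ℕ) :
    HasPowerOrder (iteratedDeriv j f) (α - j) := by
  induction j using Nat.strong_induction_on with | _ j ih => ?_
  rcases j with _ | j
  · simpa using hα
  rw [iteratedDeriv_succ, Nat.cast_succ, ← sub_sub]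
  have hj := ih j (Nat.lt_succ_self j)
  have hjH := hH.iteratedDeriv_mem_s9 hf j
  rcases ne_or_eq (α - j) 0 with hne | hzero
  · exact hj.deriv_of_ne_zero hH hLE hjH hne
  -- If `f⁽ʲ⁾ → c ≠ 0`, then `f ∼ c tʲ / j!`, which strong non-polynomiality rules out.
  rw [hzero] at hj
  rw [hzero, zero_sub]
  refine hj.deriv_of_eq_zero hH hLE hjH fun c hc hlim =>
    not_tendsto_div_pow_of_prec h₁ h₂ (div_ne_zero hc (by positivity)) j
      (hH.tendsto_div_pow_of_tendsto_iteratedDeriv hLE hf (fun i hi => ?_) hlim)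
  rcases hi.lt_or_eq with hi | rfl
  · convert ih i (hi.trans (Nat.lt_succ_self j)) using 2
    linarith
  · simpa [hzero] using hj

theorem Dom.exists_eventually_mul_log_le {f : ℝ → ℝ} {δ : ℝ} (h : Dom (fun t => t ^ δ) f) :
    ∃ C, ∀ᶠ t in atTop, f t ≠ 0 ∧ δ * log t ≤ log (f t) + C := by
  obtain ⟨C, hC, hCf⟩ := h
  refine ⟨log C, ?_⟩
  filter_upwards [hCf, eventually_gt_atTop 0] with t h ht
  have hpos := rpow_pos_of_pos ht δ
  rw [abs_of_pos hpos] at h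
  have hf : 0 < |f t| := pos_of_mul_pos_right (hpos.trans_le h) hC.le
  refine ⟨abs_pos.1 hf, ?_⟩
  have := log_le_log hpos h
  rwa [log_rpow ht, log_mul hC.ne' hf.ne', log_abs, add_comm] at this

theorem IsHardyField.exists_hasPowerOrder_iteratedDeriv (hH : IsHardyField H)
    (hLE : ContainsLE H) {f : ℝ → ℝ} (hf : f ∈ H) (hsnp : StronglyNonPoly f) {δ : ℝ}
    (hδ : 0 < δ) (hlow : Dom (fun t => t ^ δ) f) :
    ∃ α > 0, ∀ j : ℕ, HasPowerOrder (iteratedDeriv j f) (α - j) := by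
  obtain ⟨C, hC⟩ := hlow.exists_eventually_mul_log_le
  obtain ⟨k, h₁, h₂⟩ := hsnp.resolve_right fun h0 => by
    have := le_of_eventually_mul_log_le_add (a := δ) (b := 0) (C := C) <| by
      filter_upwards [hC, h0.eventually (Ioo_mem_nhds neg_one_lt_zero one_pos)]
        with t ⟨_, h⟩ hft
      have : log (f t) ≤ 0 := by
        rw [← log_abs]
        exact log_nonpos (abs_nonneg _) (abs_le.2 ⟨hft.1.le, hft.2.le⟩)
      linarith
    linarith
  have hup : ∀ᶠ t in atTop, log (f t) ≤ (k + 1 : ℕ) * log t + 0 := by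
    filter_upwards [hC, h₂.abs.eventually (gt_mem_nhds (by norm_num : |(0 : ℝ)| < 1)),
      eventually_gt_atTop 0] with t ⟨hne, _⟩ h ht
    have hpow := pow_pos ht (k + 1)
    rw [abs_div, abs_of_pos hpow, div_lt_one hpow] at h
    have := log_le_log (abs_pos.2 hne) h.le
    rwa [log_abs, log_pow, ← add_zero (_ * log t)] at this
  obtain ⟨α, hδα, hα⟩ := hH.exists_hasPowerOrder hLE hf (hC.mono fun _ h => h.1)
    (hC.mono fun _ h => h.2) hup
  exact ⟨α, hδ.trans_le hδα, hH.hasPowerOrder_iteratedDeriv hLE hf h₁ h₂ hα⟩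

namespace HasPowerOrder

variable {u : ℝ → ℝ} {a : ℝ}

theorem rpow_mul_abs_rpow (h : HasPowerOrder u a) (b p : ℝ) :
    HasPowerOrder (fun t => t ^ b * |u t| ^ p) (b + p * a) := by
  have hpos : ∀ᶠ t in atTop, 0 < t ^ b * |u t| ^ p ∧ 1 < t := by
    filter_upwards [h.1, eventually_gt_atTop 1] with t hu ht
    exact ⟨by positivity, ht⟩
  refine ⟨hpos.mono fun t h => h.1.ne', ?_⟩
  refine (tendsto_const_nhds.add (h.2.const_mul p)).congr' ?_
  filter_upwards [hpos, h.1] with t ⟨_, ht⟩ hu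
  have ht0 : 0 < t := one_pos.trans ht
  rw [log_mul (rpow_pos_of_pos ht0 _).ne' (rpow_pos_of_pos (abs_pos.2 hu) _).ne',
    log_rpow ht0, log_rpow (abs_pos.2 hu), log_abs]
  field_simp [(log_pos ht).ne']

theorem tendsto_atTop (h : HasPowerOrder u a) (ha : 0 < a) (hu : ∀ᶠ t in atTop, 0 ≤ u t) :
    Tendsto u atTop atTop := by
  have hlog : Tendsto (fun t => log (u t)) atTop atTop := by
    refine (h.2.pos_mul_atTop ha tendsto_log_atTop).congr' ?_
    filter_upwards [eventually_gt_atTop 1] with t ht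
    exact div_mul_cancel₀ _ (log_pos ht).ne'
  refine (tendsto_exp_atTop.comp hlog).congr' ?_
  filter_upwards [h.1, hu] with t hne hnn
  exact exp_log (hnn.lt_of_ne' hne)

theorem tendsto_zero (h : HasPowerOrder u a) (ha : a < 0) : Tendsto u atTop (𝓝 0) := by
  have hlog : Tendsto (fun t => log (u t)) atTop atBot := by
    refine (h.2.neg_mul_atTop ha tendsto_log_atTop).congr' ?_
    filter_upwards [eventually_gt_atTop 1] with t ht
    exact div_mul_cancel₀ _ (log_pos ht).ne'
  refine (tendsto_zero_iff_abs_tendsto_zero _).2 ((tendsto_exp_atBot.comp hlog).congr' ?_)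
  filter_upwards [h.1] with t hne
  rw [Function.comp_apply, ← log_abs, exp_log (abs_pos.2 hne)]
  rfl

end HasPowerOrder

theorem rpow_mem_SClass (hH : IsHardyField H) (hLE : ContainsLE H) {f : ℝ → ℝ} {α : ℝ}
    (hf : ∀ j : ℕ, HasPowerOrder (iteratedDeriv j f) (α - j)) {k : ℕ}
    (hk : 1 ≤ k) {y : ℝ} (hy : y ∈ Ioo (α / (k + 1)) (α / k)) :
    (fun t => t ^ (1 - y)) ∈ SClass H f k := by
  have hk₀ : (0 : ℝ) < k := by exact_mod_cast hk
  obtain ⟨hy₁, hy₂⟩ := hy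
  rw [div_lt_iff₀ (by positivity)] at hy₁
  rw [lt_div_iff₀ hk₀] at hy₂
  refine ⟨hLE.rpow_mem hH _, ?_, .inr (.inl ?_), ?_⟩
  · refine (tendsto_rpow_neg_atTop (show 0 < y by nlinarith)).congr' ?_
    filter_upwards [eventually_gt_atTop 0] with t ht
    rw [← rpow_sub_one ht.ne']
    ring_nf
  · refine ((hf k).rpow_mul_abs_rpow (1 - y) (k : ℝ)⁻¹).tendsto_atTop ?_ ?_
    · field_simp
      linarith
    · filter_upwards [eventually_gt_atTop 0] with t ht
      positivity
  · have := ((hf (k + 1)).rpow_mul_abs_rpow (1 - y) ((k : ℝ) + 1)⁻¹).tendsto_zero ?_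
    · refine this.congr fun t => ?_
      simp only [neg_div, rpow_neg (abs_nonneg _), div_inv_eq_mul, one_div]
    · push_cast
      field_simp
      linarith

theorem exists_inter_Ioo_div_nonempty {β x z : ℝ} (hx : 0 < x) (hxβ : x < β) (hxz : x < z) :
    ∃ ℓ : ℕ, 1 ≤ ℓ ∧ (Ioo x z ∩ Ioo (β / (ℓ + 1)) (β / ℓ)).Nonempty := by
  -- `ℓ + 1 = ⌈β / x⌉₊`, so that `β / (ℓ + 1) ≤ x < β / ℓ`.
  have hβx : 1 < β / x := (one_lt_div hx).2 hxβ
  obtain ⟨ℓ, hℓ⟩ : ∃ ℓ : ℕ, ⌈β / x⌉₊ = ℓ + 1 :=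
    Nat.exists_eq_add_one.2 (Nat.lt_ceil.2 (by exact_mod_cast (zero_lt_one.trans hβx)))
  have hℓ₁ : 1 ≤ ℓ := by
    have := Nat.lt_ceil.2 (by exact_mod_cast hβx : ((1 : ℕ) : ℝ) < β / x)
    omega
  have hℓ₀ : (0 : ℝ) < ℓ := by exact_mod_cast hℓ₁
  have hle : β / x ≤ ℓ + 1 := by exact_mod_cast hℓ ▸ Nat.le_ceil (β / x)
  have hlt : (ℓ : ℝ) < β / x := by
    have := Nat.ceil_lt_add_one (by positivity : 0 ≤ β / x)
    rw [hℓ] at this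
    push_cast at this
    linarith
  obtain ⟨y, hxy, hy⟩ := exists_between (lt_min hxz ((lt_div_iff₀ hℓ₀).2
    (by rwa [lt_div_iff₀ hx, mul_comm] at hlt)))
  refine ⟨ℓ, hℓ₁, y, ⟨hxy, hy.trans_le (min_le_left _ _)⟩, ?_, hy.trans_le (min_le_right _ _)⟩
  refine lt_of_le_of_lt ?_ hxy
  rw [div_le_iff₀ (by positivity)]
  rwa [div_le_iff₀ hx, mul_comm] at hle

end

theorem stmt_9_general (H : Set (ℝ → ℝ)) (hH : IsHardyField H) (hLE : ContainsLE H)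
    (f g : ℝ → ℝ) (hf : f ∈ H) (hg : g ∈ H)
    (hsnpf : StronglyNonPoly f) (hsnpg : StronglyNonPoly g)
    (δ : ℝ) (hδ : 0 < δ) (hlowf : Dom (fun t => t ^ δ) f)
    (δ' : ℝ) (hδ' : 0 < δ') (hlowg : Dom (fun t => t ^ δ') g) :
    {p : ℕ × ℕ | (SClass H f p.1 ∩ SClass H g p.2).Nonempty}.Infinite := by
  obtain ⟨α, hα, hfα⟩ := hH.exists_hasPowerOrder_iteratedDeriv hLE hf hsnpf hδ hlowf
  obtain ⟨β, hβ, hgβ⟩ := hH.exists_hasPowerOrder_iteratedDeriv hLE hg hsnpg hδ' hlowg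
  obtain ⟨K, hK⟩ := exists_nat_gt (α / β)
  refine Infinite.of_image Prod.fst ((Ici_infinite K).mono fun k (hk : K ≤ k) => ?_)
  have hk₀ : α / β < k := hK.trans_le (by exact_mod_cast hk)
  have hk₁ : 1 ≤ k := Nat.cast_pos.1 ((div_pos hα hβ).trans hk₀)
  have hxβ : α / (k + 1) < β := by
    rw [div_lt_iff₀ (by positivity)]
    rw [div_lt_iff₀ hβ] at hk₀
    linarith
  obtain ⟨ℓ, hℓ, y, hyf, hyg⟩ := exists_inter_Ioo_div_nonempty (by positivity) hxβ
    (div_lt_div_of_pos_left hα (by positivity) (lt_add_one (k : ℝ)))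
  exact ⟨(k, ℓ), ⟨_, rpow_mem_SClass hH hLE hfα hk₁ hyf, rpow_mem_SClass hH hLE hgβ hℓ hyg⟩, rfl⟩

/-- For strongly non-polynomial `f, g` in a Hardy field containing ℒℰ with
`t^δ ≪ f`, `t^{δ'} ≪ g` and `g ≪ f`, there are infinitely many pairs `(k, ℓ)` with
`S(f,k) ∩ S(g,ℓ) ≠ ∅`. -/
theorem stmt_9 (H : Set (ℝ → ℝ)) (hH : IsHardyField H) (hLE : ContainsLE H)
    (f g : ℝ → ℝ) (hf : f ∈ H) (hg : g ∈ H)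
    (hsnpf : StronglyNonPoly f) (hsnpg : StronglyNonPoly g)
    (δ : ℝ) (hδ : 0 < δ) (hlowf : Dom (fun t => t ^ δ) f)
    (δ' : ℝ) (hδ' : 0 < δ') (hlowg : Dom (fun t => t ^ δ') g)
    (hgf : Dom g f) :
    {p : ℕ × ℕ | (SClass H f p.1 ∩ SClass H g p.2).Nonempty}.Infinite :=
  stmt_9_general H hH hLE f g hf hg hsnpf hsnpg δ hδ hlowf δ' hδ' hlowg

end
end

section
/- Let H be a Hardy field containing ℒℰ and let x ∈ H be sub-fractional, i.e., x(t) ≺ t^ε for every ε > 0. Let L be a positive function with L(t) ≪ t^c for some c < 1. Then sup_{0 ≤ h ≤ L(N)} |x(N+h) − x(N)| → 0 as N → +∞. -/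
open Filter MeasureTheory Topology

noncomputable section

/-!
By the mean value theorem, `|x(N+h) - x(N)| ≤ h · sup_{ξ ≥ N} |x'(ξ)|`, so with `L(N) ≪ N^c`
it suffices that `x'(t) t^e → 0` for `e = max c 0 < 1`. The product `φ = x' · t^e` lies in `H`.
If `φ ≥ a > 0` eventually, then `x(t) - a t^(1-e)/(1-e)` is eventually increasing, contradicting
`x ≺ t^(1-e)`; so `φ < a` frequently. Elements of a Hardy field have eventually constant sign
(`f` and `1/f` are both eventually continuous), so `φ - a < 0` frequently forces `φ < a`
eventually. The lower bound is symmetric (apply the same to `-x`).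
-/

open Set

theorem SignType.coe_sign_eq_mul_abs_inv {α : Type*} [Field α] [LinearOrder α]
    [IsStrictOrderedRing α] (r : α) : (SignType.sign r : α) = r * |r⁻¹| := by
  rcases lt_trichotomy r 0 with hr | rfl | hr
  · rw [sign_neg hr, abs_of_neg (inv_lt_zero.2 hr), mul_neg, mul_inv_cancel₀ hr.ne]
    rfl
  · simp
  · rw [sign_pos hr, abs_of_pos (inv_pos.2 hr), mul_inv_cancel₀ hr.ne']
    rfl

theorem SignType.sign_coe {α : Type*} [Ring α] [LinearOrder α] [IsStrictOrderedRing α]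
    (s : SignType) : SignType.sign (s : α) = s := by
  cases s <;> simp

-- `sign ∘ f = f * |f⁻¹|` (thanks to `0⁻¹ = 0`) is continuous on a half-line and takes values
-- in a finite set, hence is constant there.
theorem exists_eventually_sign_eq_of_continuousAt_inv {f : ℝ → ℝ}
    (hf : ∀ᶠ t in atTop, ContinuousAt f t)
    (hinv : ∀ᶠ t in atTop, ContinuousAt (fun t => (f t)⁻¹) t) :
    ∃ s : SignType, ∀ᶠ t in atTop, SignType.sign (f t) = s := by
  obtain ⟨A, hA⟩ := eventually_atTop.mp (hf.and hinv)
  have hcont : ContinuousOn (fun t => (SignType.sign (f t) : ℝ)) (Ici A) := by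
    refine ContinuousOn.congr (f := fun t => f t * |(f t)⁻¹|) ?_
      fun t _ => SignType.coe_sign_eq_mul_abs_inv (f t)
    exact fun t ht => ((hA t ht).1.mul (hA t ht).2.abs).continuousWithinAt
  refine ⟨SignType.sign (f A), ?_⟩
  filter_upwards [eventually_ge_atTop A] with t ht
  simpa only [SignType.sign_coe] using congrArg SignType.sign <|
    isPreconnected_Ici.constant_of_mapsTo (finite_range _).isDiscrete hcont
      (fun t _ => mem_range_self (SignType.sign (f t))) ht self_mem_Ici

theorem frequently_deriv_mul_rpow_lt_of_tendsto_div_rpow {f : ℝ → ℝ} {δ a : ℝ}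
    (hδ : 0 < δ) (ha : 0 < a) (hf : Tendsto (fun t => f t / t ^ δ) atTop (𝓝 0))
    (hdiff : ∀ᶠ t in atTop, DifferentiableAt ℝ f t) :
    ∃ᶠ t in atTop, deriv f t * t ^ (1 - δ) < a := by
  by_contra hcon
  simp only [not_frequently, not_lt] at hcon
  obtain ⟨T, hT⟩ := eventually_atTop.mp ((hdiff.and hcon).and (eventually_gt_atTop 0))
  set g : ℝ → ℝ := fun t => f t - a / δ * t ^ δ
  have hg : ∀ t ≥ T, HasDerivAt g (deriv f t - a / δ * (δ * t ^ (δ - 1))) t := fun t ht =>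
    (hT t ht).1.1.hasDerivAt.sub
      ((Real.hasDerivAt_rpow_const (Or.inl (hT t ht).2.ne')).const_mul _)
  have hg_nonneg : ∀ t ≥ T, 0 ≤ deriv f t - a / δ * (δ * t ^ (δ - 1)) := by
    intro t ht
    have htpos : 0 < t ^ (1 - δ) := Real.rpow_pos_of_pos (hT t ht).2 _
    have hinv : t ^ (δ - 1) = (t ^ (1 - δ))⁻¹ := by
      rw [← Real.rpow_neg (hT t ht).2.le, neg_sub]
    rw [hinv, show a / δ * (δ * (t ^ (1 - δ))⁻¹) = a / t ^ (1 - δ) by field_simp,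
      sub_nonneg, div_le_iff₀ htpos]
    exact (hT t ht).1.2
  have hg_mono : MonotoneOn g (Ici T) := by
    refine monotoneOn_of_hasDerivWithinAt_nonneg (convex_Ici T)
      (fun t ht => (hg t ht).continuousAt.continuousWithinAt)
      (fun t ht => (hg t (interior_subset ht)).hasDerivWithinAt)
      (fun t ht => hg_nonneg t (interior_subset ht))
  have hlow : ∀ t ≥ T, g T / t ^ δ + a / δ ≤ f t / t ^ δ := by
    intro t ht
    have htδ : 0 < t ^ δ := Real.rpow_pos_of_pos ((hT T le_rfl).2.trans_le ht) _
    have hgT := hg_mono self_mem_Ici ht ht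
    rw [div_add' _ _ _ htδ.ne', div_le_div_iff_of_pos_right htδ]
    simp only [g] at hgT ⊢
    linarith
  have hlim : Tendsto (fun t => g T / t ^ δ + a / δ) atTop (𝓝 (a / δ)) := by
    simpa using (tendsto_const_nhds.div_atTop (tendsto_rpow_atTop hδ)).add_const (a / δ)
  exact (div_pos ha hδ).not_ge
    (le_of_tendsto_of_tendsto hlim hf (eventually_atTop.2 ⟨T, hlow⟩))

theorem eventually_abs_sub_lt_of_tendsto_deriv_mul_rpow {f L : ℝ → ℝ} {c e : ℝ}
    (he : 0 ≤ e) (hce : c ≤ e) (hdiff : ∀ᶠ t in atTop, DifferentiableAt ℝ f t)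
    (hf : Tendsto (fun t => deriv f t * t ^ e) atTop (𝓝 0)) (hL : Dom L fun t => t ^ c)
    {ε : ℝ} (hε : 0 < ε) :
    ∀ᶠ N in atTop, ∀ h ∈ Icc 0 (L N), |f (N + h) - f N| < ε := by
  obtain ⟨C, hC, hLC⟩ := hL
  have hsmall : ∀ᶠ t in atTop, |deriv f t * t ^ e| < ε / (2 * C) :=
    hf.abs.eventually (eventually_lt_nhds (by rw [abs_zero]; positivity))
  obtain ⟨A, hA⟩ := eventually_atTop.mp (hdiff.and hsmall)
  filter_upwards [eventually_ge_atTop (max A 1), hLC] with N hN hLN h ⟨hh0, hhL⟩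
  have hN1 : 1 ≤ N := le_of_max_le_right hN
  have hNpos : 0 < N := one_pos.trans_le hN1
  have hderiv : ∀ ξ ∈ Ici N, ‖deriv f ξ‖ ≤ ε / (2 * C) / N ^ e := by
    intro ξ hξ
    rw [Real.norm_eq_abs, le_div_iff₀ (Real.rpow_pos_of_pos hNpos e)]
    calc |deriv f ξ| * N ^ e ≤ |deriv f ξ| * ξ ^ e := by
          gcongr; exact hξ
      _ = |deriv f ξ * ξ ^ e| := by
          rw [abs_mul, abs_of_pos (Real.rpow_pos_of_pos (hNpos.trans_le hξ) e)]
      _ ≤ ε / (2 * C) := (hA ξ ((le_of_max_le_left hN).trans hξ)).2.le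
  have hmvt := (convex_Ici N).norm_image_sub_le_of_norm_deriv_le
    (fun ξ hξ => (hA ξ ((le_of_max_le_left hN).trans hξ)).1) hderiv self_mem_Ici
    (show N + h ∈ Ici N by simpa using hh0)
  have hh_le : h ≤ C * N ^ c := by
    calc h ≤ |L N| := hhL.trans (le_abs_self _)
      _ ≤ C * |N ^ c| := hLN
      _ = C * N ^ c := by rw [abs_of_pos (Real.rpow_pos_of_pos hNpos c)]
  calc |f (N + h) - f N| ≤ ε / (2 * C) / N ^ e * h := by
        simpa [abs_of_nonneg hh0] using hmvt
    _ ≤ ε / (2 * C) / N ^ e * (C * N ^ e) := by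
        gcongr
        exact hh_le.trans (by gcongr)
    _ = ε / 2 := by field_simp
    _ < ε := half_lt_self hε

namespace IsHardyField

variable {H : Set (ℝ → ℝ)}

theorem exists_eventually_sign_eq (hH : IsHardyField H) {f : ℝ → ℝ} (hf : f ∈ H) :
    ∃ s : SignType, ∀ᶠ t in atTop, SignType.sign (f t) = s := by
  by_cases hz : f =ᶠ[atTop] fun _ => 0
  · exact ⟨0, hz.mono fun t ht => by simp [ht]⟩
  exact exists_eventually_sign_eq_of_continuousAt_inv
    ((hH.eventuallyDifferentiable hf).mono fun _ h => h.continuousAt)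
    ((hH.eventuallyDifferentiable (hH.inv_mem hf hz)).mono fun _ h => h.continuousAt)

theorem eventually_lt_of_frequently_lt (hH : IsHardyField H) {f g : ℝ → ℝ} (hf : f ∈ H)
    (hg : g ∈ H) (hfg : ∃ᶠ t in atTop, f t < g t) : ∀ᶠ t in atTop, f t < g t := by
  obtain ⟨s, hs⟩ := hH.exists_eventually_sign_eq (hH.add_mem hg (hH.neg_mem hf))
  obtain ⟨t, hlt, hst⟩ := (hfg.and_eventually hs).exists
  have hs1 : s = 1 := hst ▸ sign_pos (by simpa using hlt)
  filter_upwards [hs] with t ht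
  simpa using sign_eq_one_iff.mp (ht.trans hs1)

theorem rpow_mem (hH : IsHardyField H) (hLE : ContainsLE H) (r : ℝ) :
    (fun t : ℝ => t ^ r) ∈ H := by
  refine hH.mem_congr (hLE _ (.exp (.mul (.const r) (.log .id)))) ?_
  filter_upwards [eventually_gt_atTop 0] with t ht
  simp [Real.rpow_def_of_pos ht, mul_comm]

theorem tendsto_deriv_mul_rpow_of_subfractional (hH : IsHardyField H) (hLE : ContainsLE H)
    {x : ℝ → ℝ} (hx : x ∈ H) (hsub : ∀ ε : ℝ, 0 < ε → Prec x fun t => t ^ ε) {c : ℝ}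
    (hc : c < 1) : Tendsto (fun t => deriv x t * t ^ c) atTop (𝓝 0) := by
  have hφ : deriv x * (fun t => t ^ c) ∈ H := hH.mul_mem (hH.deriv_mem hx) (hH.rpow_mem hLE c)
  have hconst (a : ℝ) : (fun _ : ℝ => a) ∈ H := hLE _ (.const a)
  have hδ : 0 < 1 - c := sub_pos.2 hc
  have hdiff := hH.eventuallyDifferentiable hx
  refine tendsto_order.2 ⟨fun a ha => ?_, fun b hb => ?_⟩
  · refine hH.eventually_lt_of_frequently_lt (hconst a) hφ ?_
    simpa only [sub_sub_cancel, deriv.neg', neg_mul, neg_lt_neg_iff] using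
      frequently_deriv_mul_rpow_lt_of_tendsto_div_rpow hδ (neg_pos.2 ha)
        (by simpa [neg_div] using (hsub _ hδ).neg) (hdiff.mono fun _ h => h.neg)
  · refine hH.eventually_lt_of_frequently_lt hφ (hconst b) ?_
    simpa only [sub_sub_cancel] using
      frequently_deriv_mul_rpow_lt_of_tendsto_div_rpow hδ hb (hsub _ hδ) hdiff

end IsHardyField

theorem stmt_15_general (H : Set (ℝ → ℝ)) (hH : IsHardyField H) (hLE : ContainsLE H)
    (x : ℝ → ℝ) (hx : x ∈ H) (hsub : ∀ ε : ℝ, 0 < ε → Prec x fun t => t ^ ε)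
    (L : ℝ → ℝ)
    (c : ℝ) (hc : c < 1) (hL : Dom L fun t => t ^ c) :
    ∀ ε : ℝ, 0 < ε → ∀ᶠ N : ℝ in Filter.atTop, ∀ h ∈ Set.Icc (0 : ℝ) (L N),
      |x (N + h) - x N| < ε := fun _ hε =>
  eventually_abs_sub_lt_of_tendsto_deriv_mul_rpow (le_max_right c 0) (le_max_left c 0)
    (hH.eventuallyDifferentiable hx)
    (hH.tendsto_deriv_mul_rpow_of_subfractional hLE hx hsub (max_lt hc one_pos)) hL hε

/-- A sub-fractional `x ∈ H` is asymptotically constant on intervals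
`[N, N + L(N)]` whenever `L(t) ≪ t^c` for some `c < 1`. -/
theorem stmt_15 (H : Set (ℝ → ℝ)) (hH : IsHardyField H) (hLE : ContainsLE H)
    (x : ℝ → ℝ) (hx : x ∈ H) (hsub : ∀ ε : ℝ, 0 < ε → Prec x fun t => t ^ ε)
    (L : ℝ → ℝ) (hLpos : ∀ t, 0 < L t)
    (c : ℝ) (hc : c < 1) (hL : Dom L fun t => t ^ c) :
    ∀ ε : ℝ, 0 < ε → ∀ᶠ N : ℝ in Filter.atTop, ∀ h ∈ Set.Icc (0 : ℝ) (L N),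
      |x (N + h) - x N| < ε :=
  stmt_15_general H hH hLE x hx hsub L c hc hL
end
end
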